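/- arXiv:1809.09581 — 13 statements merged into one kernel-verified Lean document; each statement's English description precedes it below -/
import Mathlib

section
/- Let θ1, θ2 ∈ ℝ and set α = exp(−i·θ1), β = exp(−i·θ2). Let c, s, c', s' be complex numbers satisfying c·s' − s·c' = 1 and c = s'. Then there exists a nonzero vector (A1, A2, A3, B1, B2, B3) ∈ ℂ⁶ satisfying the homogeneous system A1 = A2 = A3 = α·(A1·c + B1·s) = β·(A2·c + B2·s) = α⁻¹·β·(A3·c + B3·s) and −B1 − B2 − B3 + α·(A1·c' + B1·s') + β·(A2·c' + B2·s') + α⁻¹·β·(A3·c' + B3·s') = 0, if and only if s²·(3·s' + 1 − 4·cos(θ1/2)·cos(θ2/2)·cos((θ2−θ1)/2)) = 0. (This is the dispersion relation of the periodic quantum graph associated with the triangular tiling (3⁶) with identical even edge potentials.) -/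
open Complex in
private theorem coskey (θ1 θ2 : ℝ) :
    2 * (4 * (Real.cos (θ1 / 2) : ℂ) * (Real.cos (θ2 / 2) : ℂ) * (Real.cos ((θ2 - θ1) / 2) : ℂ))
    = Complex.exp (-(Complex.I * θ1)) + Complex.exp (-(Complex.I * θ2))
      + (Complex.exp (-(Complex.I * θ1)))⁻¹ * Complex.exp (-(Complex.I * θ2))
      + (Complex.exp (-(Complex.I * θ1)))⁻¹ + (Complex.exp (-(Complex.I * θ2)))⁻¹
      + Complex.exp (-(Complex.I * θ1)) * (Complex.exp (-(Complex.I * θ2)))⁻¹ + 2 := by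
  set a := Complex.exp ((θ1:ℂ)/2 * I) with ha
  set b := Complex.exp ((θ2:ℂ)/2 * I) with hb
  have ha0 : a ≠ 0 := Complex.exp_ne_zero _
  have hb0 : b ≠ 0 := Complex.exp_ne_zero _
  have h1 : Complex.exp (-(Complex.I * θ1)) = a⁻¹ * a⁻¹ := by
    rw [ha, ← Complex.exp_neg, ← Complex.exp_add]; congr 1; ring
  have h2 : Complex.exp (-(Complex.I * θ2)) = b⁻¹ * b⁻¹ := by
    rw [hb, ← Complex.exp_neg, ← Complex.exp_add]; congr 1; ring
  have h1' : (Complex.exp (-(Complex.I * θ1)))⁻¹ = a * a := by rw [h1, mul_inv, inv_inv]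
  have h2' : (Complex.exp (-(Complex.I * θ2)))⁻¹ = b * b := by rw [h2, mul_inv, inv_inv]
  have hc1 : (Real.cos (θ1 / 2) : ℂ) = (a + a⁻¹) / 2 := by
    rw [Complex.ofReal_cos, Complex.cos, ha, ← Complex.exp_neg]
    push_cast; congr 2; ring
  have hc2 : (Real.cos (θ2 / 2) : ℂ) = (b + b⁻¹) / 2 := by
    rw [Complex.ofReal_cos, Complex.cos, hb, ← Complex.exp_neg]
    push_cast; congr 2; ring
  have hc3 : (Real.cos ((θ2 - θ1) / 2) : ℂ) = (b * a⁻¹ + a * b⁻¹) / 2 := by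
    rw [Complex.ofReal_cos, Complex.cos]
    have e1 : ((↑((θ2 - θ1)/2) : ℂ)) * I = (θ2:ℂ)/2 * I + -((θ1:ℂ)/2 * I) := by push_cast; ring
    have e2 : -((↑((θ2 - θ1)/2) : ℂ)) * I = (θ1:ℂ)/2 * I + -((θ2:ℂ)/2 * I) := by push_cast; ring
    rw [e1, e2, Complex.exp_add, Complex.exp_add, Complex.exp_neg, Complex.exp_neg, ← ha, ← hb]
  clear_value a b
  rw [h1', h2', h1, h2, hc1, hc2, hc3]
  have hi : a * a⁻¹ = 1 := mul_inv_cancel₀ ha0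
  have hj : b * b⁻¹ = 1 := mul_inv_cancel₀ hb0
  set i := a⁻¹
  set j := b⁻¹
  linear_combination (b^2 + j^2 + 2*b*j) * hi + (a^2 + i^2 + 2) * hj

private theorem aux_disp (θ1 θ2 : ℝ) (c s c' s' : ℂ)
    (hW : c * s' - s * c' = 1) (hE : c = s') :
    (∃ A1 A2 A3 B1 B2 B3 : ℂ,
      (A1, A2, A3, B1, B2, B3) ≠ (0, 0, 0, 0, 0, 0) ∧
      (A1 = A2 ∧ A2 = A3 ∧
       A3 = Complex.exp (-(Complex.I * θ1)) * (A1 * c + B1 * s) ∧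
       Complex.exp (-(Complex.I * θ1)) * (A1 * c + B1 * s)
         = Complex.exp (-(Complex.I * θ2)) * (A2 * c + B2 * s) ∧
       Complex.exp (-(Complex.I * θ2)) * (A2 * c + B2 * s)
         = (Complex.exp (-(Complex.I * θ1)))⁻¹ * Complex.exp (-(Complex.I * θ2))
            * (A3 * c + B3 * s) ∧
       -B1 - B2 - B3 + Complex.exp (-(Complex.I * θ1)) * (A1 * c' + B1 * s')
         + Complex.exp (-(Complex.I * θ2)) * (A2 * c' + B2 * s')
         + (Complex.exp (-(Complex.I * θ1)))⁻¹ * Complex.exp (-(Complex.I * θ2))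
            * (A3 * c' + B3 * s') = 0))
    ↔ s ^ 2 * (3 * s' + 1
        - 4 * (Real.cos (θ1 / 2) : ℂ) * (Real.cos (θ2 / 2) : ℂ)
            * (Real.cos ((θ2 - θ1) / 2) : ℂ)) = 0 := by
  subst hE
  have hcos := coskey θ1 θ2
  set α := Complex.exp (-(Complex.I * (θ1:ℝ))) with hαd
  set β := Complex.exp (-(Complex.I * (θ2:ℝ))) with hβd
  have hα0 : α ≠ 0 := Complex.exp_ne_zero _
  have hβ0 : β ≠ 0 := Complex.exp_ne_zero _
  set α' := α⁻¹ with hα'd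
  set β' := β⁻¹ with hβ'd
  have hαα' : α * α' = 1 := mul_inv_cancel₀ hα0
  have hββ' : β * β' = 1 := mul_inv_cancel₀ hβ0
  have hsc : s * c' = c * c - 1 := by linear_combination -hW
  constructor
  · rintro ⟨A1, A2, A3, B1, B2, B3, hne, h1, h2, h3, h4, h5, h6⟩
    obtain rfl := h1
    obtain rfl := h2
    by_cases hs : s = 0
    · rw [hs]; ring
    · have hB1 : B1 * s = A1 * α' - A1 * c := by
        linear_combination (-α') * h3 - (A1*c + B1*s) * hαα'
      have h34 : A1 = β * (A1 * c + B2 * s) := h3.trans h4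
      have hB2 : B2 * s = A1 * β' - A1 * c := by
        linear_combination (-β') * h34 - (A1*c + B2*s) * hββ'
      have h345 : A1 = α' * β * (A1 * c + B3 * s) := h34.trans h5
      have hB3 : B3 * s = A1 * α * β' - A1 * c := by
        linear_combination (-(α*β')) * h345 - ((A1*c + B3*s)*β*β') * hαα'
          - (A1*c + B3*s) * hββ'
      have hA1 : A1 ≠ 0 := by
        rintro rfl
        have b1 : B1 = 0 := by simpa [hs] using hB1
        have b2 : B2 = 0 := by simpa [hs] using hB2
        have b3 : B3 = 0 := by simpa [hs] using hB3
        exact hne (by simp [b1, b2, b3])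
      have key : A1 * (6*c - (α + β + α'*β + α' + β' + α*β')) = 0 := by
        linear_combination s * h6 + (1 - α*c) * hB1 + (1 - β*c) * hB2
          + (1 - α'*β*c) * hB3 - A1*(α + β + α'*β) * hsc
          - A1*c*(1 + β*β') * hαα' - 2*A1*c * hββ'
      have hF : 6*c - (α + β + α'*β + α' + β' + α*β') = 0 :=
        (mul_eq_zero.mp key).resolve_left hA1
      linear_combination (s^2/2) * hF - (s^2/2) * hcos
  · intro hP
    by_cases hs : s = 0
    · subst hs
      by_cases hpq : c * α - 1 = c * β - 1
      · refine ⟨0, 0, 0, 1, -1, 0, ?_, rfl, rfl, by ring, by ring, by ring, ?_⟩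
        · simp
        · linear_combination hpq
      · refine ⟨0, 0, 0, c * β - 1, -(c * α - 1), 0, ?_, rfl, rfl, by ring, by ring,
          by ring, ?_⟩
        · intro h
          rw [Prod.mk.injEq, Prod.mk.injEq, Prod.mk.injEq, Prod.mk.injEq,
            Prod.mk.injEq] at h
          exact hpq (by rw [h.2.2.2.1, show c*α-1 = 0 by linear_combination -h.2.2.2.2.1])
        · linear_combination (c*β - 1) * hpq
    · have hP0 : 3*c + 1 - 4 * (Real.cos (θ1 / 2) : ℂ) * (Real.cos (θ2 / 2) : ℂ)
            * (Real.cos ((θ2 - θ1) / 2) : ℂ) = 0 :=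
        (mul_eq_zero.mp hP).resolve_left (pow_ne_zero 2 hs)
      have hF : 6*c - (α + β + α'*β + α' + β' + α*β') = 0 := by
        linear_combination 2 * hP0 + hcos
      refine ⟨s, s, s, α' - c, β' - c, α*β' - c, ?_, rfl, rfl, ?_, ?_, ?_, ?_⟩
      · intro h
        rw [Prod.mk.injEq] at h
        exact hs h.1
      · linear_combination (-s) * hαα'
      · linear_combination s * hαα' - s * hββ'
      · linear_combination (-(s*β*β')) * hαα'
      · linear_combination (α + β + α'*β) * hsc + hF + c*(1 + β*β') * hαα' + 2*c * hββ'

/-- Dispersion relation of the periodic quantum graph associated with the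
triangular tiling `(3⁶)` with identical even edge potentials: the homogeneous
vertex/Floquet system has a nontrivial solution iff
`s² (3 s' + 1 − 4 cos(θ1/2) cos(θ2/2) cos((θ2−θ1)/2)) = 0`. -/
theorem triangular_tiling_dispersion_relation
    (θ1 θ2 : ℝ) (c s c' s' : ℂ)
    (hW : c * s' - s * c' = 1) (hE : c = s') :
    (∃ A1 A2 A3 B1 B2 B3 : ℂ,
      (A1, A2, A3, B1, B2, B3) ≠ (0, 0, 0, 0, 0, 0) ∧
      (let α : ℂ := Complex.exp (-(Complex.I * θ1));
       let β : ℂ := Complex.exp (-(Complex.I * θ2));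
       A1 = A2 ∧ A2 = A3 ∧
       A3 = α * (A1 * c + B1 * s) ∧
       α * (A1 * c + B1 * s) = β * (A2 * c + B2 * s) ∧
       β * (A2 * c + B2 * s) = α⁻¹ * β * (A3 * c + B3 * s) ∧
       -B1 - B2 - B3 + α * (A1 * c' + B1 * s') + β * (A2 * c' + B2 * s')
         + α⁻¹ * β * (A3 * c' + B3 * s') = 0))
    ↔ s ^ 2 * (3 * s' + 1
        - 4 * (Real.cos (θ1 / 2) : ℂ) * (Real.cos (θ2 / 2) : ℂ)
            * (Real.cos ((θ2 - θ1) / 2) : ℂ)) = 0 := by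
  exact aux_disp θ1 θ2 c s c' s' hW hE
end

section
/- Let θ1, θ2 ∈ ℝ and set α̃ = exp(i·θ1), β = exp(−i·θ2). Let c, s, c', s' be complex numbers satisfying c·s' − s·c' = 1 and c = s'. Then there exists a nonzero vector (A1, ..., A5, B1, ..., B5) ∈ ℂ¹⁰ satisfying the homogeneous system: A1·c + B1·s = A2·c + B2·s = α̃·A2 = A3·c + B3·s = A4·c + B4·s; (A1·c' + B1·s') + (A2·c' + B2·s') − α̃·B2 + (A3·c' + B3·s') + (A4·c' + B4·s') = 0; A4 = A5·c + B5·s = α̃·A3 = α̃·A5 = α̃·β·A1; and B4 − (A5·c' + B5·s') + α̃·B3 + α̃·B5 + α̃·β·B1 = 0, if and only if s³·(25·s'² − 20·cos(θ1)·s' − 8·cos(θ1/2)·cos(θ2/2)·cos((θ1−θ2)/2) + 4·cos²(θ1) − 1) = 0. (This is the dispersion relation of the periodic quantum graph associated with the elongated triangular tiling (3³,4²) with identical even edge potentials.) -/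
private lemma cos_exp (x : ℝ) :
    (Real.cos x : ℂ) = (Complex.exp ((x:ℂ) * Complex.I) + (Complex.exp ((x:ℂ) * Complex.I))⁻¹) / 2 := by
  rw [Complex.ofReal_cos, Complex.cos, ← Complex.exp_neg, neg_mul]

private lemma key_identity (θ1 θ2 : ℝ) (d : ℂ) :
    (1 + Complex.exp (-(Complex.I * θ2)) + Complex.exp (Complex.I * θ1) * Complex.exp (-(Complex.I * θ2)))
        * (Complex.exp (Complex.I * θ1) * (1 + Complex.exp (Complex.I * θ1)
            + Complex.exp (Complex.I * θ1) * Complex.exp (-(Complex.I * θ2))))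
      + (5 * Complex.exp (Complex.I * θ1) * d - 1 - Complex.exp (Complex.I * θ1) ^ 2)
        * (Complex.exp (-(Complex.I * θ2)) * (1 + Complex.exp (Complex.I * θ1) ^ 2
            - 5 * Complex.exp (Complex.I * θ1) * d))
    = -(Complex.exp (Complex.I * θ1) ^ 2 * Complex.exp (-(Complex.I * θ2)))
        * (25 * d ^ 2 - 20 * (Real.cos θ1 : ℂ) * d
          - 8 * (Real.cos (θ1 / 2) : ℂ) * (Real.cos (θ2 / 2) : ℂ)
              * (Real.cos ((θ1 - θ2) / 2) : ℂ)
          + 4 * (Real.cos θ1 : ℂ) ^ 2 - 1) := by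
  have he1 : Complex.exp (((θ1 / 2 : ℝ) : ℂ) * Complex.I) ≠ 0 := Complex.exp_ne_zero _
  have he2 : Complex.exp (((θ2 / 2 : ℝ) : ℂ) * Complex.I) ≠ 0 := Complex.exp_ne_zero _
  set e1 := Complex.exp (((θ1 / 2 : ℝ) : ℂ) * Complex.I) with he1def
  set e2 := Complex.exp (((θ2 / 2 : ℝ) : ℂ) * Complex.I) with he2def
  have f1 : Complex.exp (Complex.I * θ1) = e1 ^ 2 := by
    rw [he1def, sq, ← Complex.exp_add]; congr 1; push_cast; ring
  have f2 : Complex.exp (-(Complex.I * θ2)) = (e2 ^ 2)⁻¹ := by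
    rw [he2def, sq, ← Complex.exp_add, ← Complex.exp_neg]; congr 1; push_cast; ring
  have f3 : (Real.cos θ1 : ℂ) = (e1 ^ 2 + (e1 ^ 2)⁻¹) / 2 := by
    rw [cos_exp]
    have : ((θ1 : ℂ)) * Complex.I = ((θ1/2 : ℝ) : ℂ) * Complex.I + ((θ1/2 : ℝ) : ℂ) * Complex.I := by
      push_cast; ring
    rw [this, Complex.exp_add, ← he1def, ← sq]
  have f4 : (Real.cos (θ1 / 2) : ℂ) = (e1 + e1⁻¹) / 2 := by rw [cos_exp]
  have f5 : (Real.cos (θ2 / 2) : ℂ) = (e2 + e2⁻¹) / 2 := by rw [cos_exp]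
  have f6 : (Real.cos ((θ1 - θ2) / 2) : ℂ) = (e1 * e2⁻¹ + (e1 * e2⁻¹)⁻¹) / 2 := by
    rw [cos_exp]
    have : (((θ1 - θ2) / 2 : ℝ) : ℂ) * Complex.I
        = ((θ1/2 : ℝ) : ℂ) * Complex.I - ((θ2/2 : ℝ) : ℂ) * Complex.I := by push_cast; ring
    rw [this, Complex.exp_sub, ← he1def, ← he2def]
    ring
  clear_value e1 e2
  have i1 : e1 * e1⁻¹ = 1 := mul_inv_cancel₀ he1
  have i2 : e2 * e2⁻¹ = 1 := mul_inv_cancel₀ he2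
  rw [f1, f2, f3, f4, f5, f6, mul_inv, inv_inv]
  linear_combination ((1) * e2⁻¹ ^ 2 + (1) * e1 * e1⁻¹ * e2⁻¹ ^ 2 + (-10) * e1 ^ 2 * e2⁻¹ ^ 2 * d + (-1) * e1 ^ 2 * e2 * e2⁻¹ ^ 3 + (-1) * e1 ^ 2 * e2 ^ 2 * e2⁻¹ ^ 2 + (1) * e1 ^ 2 * e1⁻¹ ^ 2 * e2⁻¹ ^ 2 + (-10) * e1 ^ 3 * e1⁻¹ * e2⁻¹ ^ 2 * d + (-1) * e1 ^ 3 * e1⁻¹ * e2 * e2⁻¹ ^ 3 + (-1) * e1 ^ 3 * e1⁻¹ * e2 ^ 2 * e2⁻¹ ^ 2 + (1) * e1 ^ 3 * e1⁻¹ ^ 3 * e2⁻¹ ^ 2 + (2) * e1 ^ 4 * e2⁻¹ ^ 2 + (-1) * e1 ^ 4 * e2⁻¹ ^ 4 + (-2) * e1 ^ 4 * e2 * e2⁻¹ ^ 3 + (-1) * e1 ^ 4 * e2 ^ 2 * e2⁻¹ ^ 2 + (2) * e1 ^ 5 * e1⁻¹ * e2⁻¹ ^ 2) * i1 + ((-1)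 * e1 ^ 2 + (-1) * e1 ^ 2 * e2⁻¹ ^ 2 + (-1) * e1 ^ 2 * e2 * e2⁻¹ + (-1) * e1 ^ 4 + (-2) * e1 ^ 4 * e2⁻¹ ^ 2 + (-1) * e1 ^ 4 * e2 * e2⁻¹ + (-1) * e1 ^ 6 * e2⁻¹ ^ 2) * i2

private lemma construct_sol (θ1 θ2 : ℝ) (s c' d A1 A2 : ℂ)
    (hW : d * d - s * c' = 1) (hs : s ≠ 0)
    (hne : ¬(A1 = 0 ∧ A2 = 0))
    (hT5 : (1 + Complex.exp (-(Complex.I * θ2))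
          + Complex.exp (Complex.I * θ1) * Complex.exp (-(Complex.I * θ2))) * A1
        - (5 * Complex.exp (Complex.I * θ1) * d - 1 - Complex.exp (Complex.I * θ1) ^ 2) * A2 = 0)
    (hT10 : Complex.exp (-(Complex.I * θ2)) * (1 + Complex.exp (Complex.I * θ1) ^ 2
          - 5 * Complex.exp (Complex.I * θ1) * d) * A1
        + Complex.exp (Complex.I * θ1) * (1 + Complex.exp (Complex.I * θ1)
          + Complex.exp (Complex.I * θ1) * Complex.exp (-(Complex.I * θ2))) * A2 = 0) :
    (∃ A1' A2' A3 A4 A5 B1 B2 B3 B4 B5 : ℂ,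
      (A1', A2', A3, A4, A5, B1, B2, B3, B4, B5) ≠ (0, 0, 0, 0, 0, 0, 0, 0, 0, 0) ∧
      (let α : ℂ := Complex.exp (Complex.I * θ1);
       let β : ℂ := Complex.exp (-(Complex.I * θ2));
       A1' * d + B1 * s = A2' * d + B2 * s ∧
       A2' * d + B2 * s = α * A2' ∧
       α * A2' = A3 * d + B3 * s ∧
       A3 * d + B3 * s = A4 * d + B4 * s ∧
       (A1' * c' + B1 * d) + (A2' * c' + B2 * d) - α * B2
         + (A3 * c' + B3 * d) + (A4 * c' + B4 * d) = 0 ∧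
       A4 = A5 * d + B5 * s ∧
       A5 * d + B5 * s = α * A3 ∧
       α * A3 = α * A5 ∧
       α * A5 = α * β * A1' ∧
       B4 - (A5 * c' + B5 * d) + α * B3 + α * B5 + α * β * B1 = 0)) := by
  set α : ℂ := Complex.exp (Complex.I * θ1) with hαdef
  set β : ℂ := Complex.exp (-(Complex.I * θ2)) with hβdef
  have hsinv : s * s⁻¹ = 1 := mul_inv_cancel₀ hs
  refine ⟨A1, A2, β * A1, α * (β * A1), β * A1,
    (α * A2 - d * A1) / s, ((α - d) * A2) / s, (α * A2 - d * (β * A1)) / s,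
    (α * A2 - d * (α * (β * A1))) / s, ((α - d) * (β * A1)) / s, ?_, ?_, ?_, ?_, ?_, ?_, ?_, ?_, ?_, ?_, ?_⟩
  · intro h
    simp only [Prod.mk.injEq] at h
    exact hne ⟨h.1, h.2.1⟩
  · linear_combination ((α * A2 - d * A1) - (α - d) * A2) * hsinv
  · linear_combination ((α - d) * A2) * hsinv
  · linear_combination (-(α * A2 - d * (β * A1))) * hsinv
  · linear_combination ((α * A2 - d * (β * A1)) - (α * A2 - d * (α * (β * A1)))) * hsinv
  · linear_combination (-(1/s)) * hT5 - ((A1 + A2 + β * A1 + α * β * A1)/s) * hW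
      - c' * (A1 + A2 + β * A1 + α * β * A1) * hsinv
  · linear_combination (-((α - d) * (β * A1))) * hsinv
  · linear_combination ((α - d) * (β * A1)) * hsinv
  · ring
  · ring
  · linear_combination (1/s) * hT10 + (β * A1 / s) * hW + β * A1 * c' * hsinv

/-- Dispersion relation of the periodic quantum graph associated with the
elongated triangular tiling `(3³,4²)` with identical even edge potentials. -/
theorem elongated_triangular_tiling_dispersion_relation
    (θ1 θ2 : ℝ) (c s c' s' : ℂ)
    (hW : c * s' - s * c' = 1) (hE : c = s') :
    (∃ A1 A2 A3 A4 A5 B1 B2 B3 B4 B5 : ℂ,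
      (A1, A2, A3, A4, A5, B1, B2, B3, B4, B5) ≠ (0, 0, 0, 0, 0, 0, 0, 0, 0, 0) ∧
      (let α : ℂ := Complex.exp (Complex.I * θ1);
       let β : ℂ := Complex.exp (-(Complex.I * θ2));
       A1 * c + B1 * s = A2 * c + B2 * s ∧
       A2 * c + B2 * s = α * A2 ∧
       α * A2 = A3 * c + B3 * s ∧
       A3 * c + B3 * s = A4 * c + B4 * s ∧
       (A1 * c' + B1 * s') + (A2 * c' + B2 * s') - α * B2
         + (A3 * c' + B3 * s') + (A4 * c' + B4 * s') = 0 ∧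
       A4 = A5 * c + B5 * s ∧
       A5 * c + B5 * s = α * A3 ∧
       α * A3 = α * A5 ∧
       α * A5 = α * β * A1 ∧
       B4 - (A5 * c' + B5 * s') + α * B3 + α * B5 + α * β * B1 = 0))
    ↔ s ^ 3 * (25 * s' ^ 2 - 20 * (Real.cos θ1 : ℂ) * s'
        - 8 * (Real.cos (θ1 / 2) : ℂ) * (Real.cos (θ2 / 2) : ℂ)
            * (Real.cos ((θ1 - θ2) / 2) : ℂ)
        + 4 * (Real.cos θ1 : ℂ) ^ 2 - 1) = 0 := by
  subst hE
  set α : ℂ := Complex.exp (Complex.I * θ1) with hαdef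
  set β : ℂ := Complex.exp (-(Complex.I * θ2)) with hβdef
  have hα : α ≠ 0 := Complex.exp_ne_zero _
  have hβ : β ≠ 0 := Complex.exp_ne_zero _
  have K := key_identity θ1 θ2 c
  rw [← hαdef, ← hβdef] at K
  by_cases hs : s = 0
  · subst hs
    constructor
    · intro _
      norm_num
    · intro _
      have hd : c ≠ 0 := by
        intro h
        rw [h] at hW
        simp at hW
      refine ⟨0, 0, 0, 0, 0, 0, c, α - c, 0, -α, ?_, ?_, ?_, ?_, ?_, ?_, ?_, ?_, ?_, ?_, ?_⟩
      · intro h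
        simp only [Prod.mk.injEq] at h
        exact hd h.2.2.2.2.2.2.1
      all_goals ring
  · constructor
    · rintro ⟨A1, A2, A3, A4, A5, B1, B2, B3, B4, B5, hne, h1, h2, h3, h4, h5, h6, h7, h8, h9, h10⟩
      have hA3 : A3 = A5 := mul_left_cancel₀ hα h8
      have hA5 : A5 = β * A1 := mul_left_cancel₀ hα (by linear_combination h9)
      subst hA3
      subst hA5
      have hA4 : A4 = α * (β * A1) := by rw [h6, h7]
      subst hA4
      have hB1 : B1 * s = α * A2 - c * A1 := by linear_combination h1 + h2
      have hB2 : B2 * s = (α - c) * A2 := by linear_combination h2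
      have hB3 : B3 * s = α * A2 - c * (β * A1) := by linear_combination -h3
      have hB4 : B4 * s = α * A2 - c * (α * (β * A1)) := by linear_combination - h3 - h4
      have hB5 : B5 * s = (α - c) * (β * A1) := by linear_combination h7
      have hT5 : (1 + β + α * β) * A1 - (5 * α * c - 1 - α ^ 2) * A2 = 0 := by
        linear_combination (-s) * h5 + c * hB1 + c * hB2 + c * hB3 + c * hB4 - α * hB2
          - (A1 + A2 + β * A1 + α * β * A1) * hW
      have hT10 : β * (1 + α ^ 2 - 5 * α * c) * A1 + α * (1 + α + α * β) * A2 = 0 := by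
        linear_combination s * h10 - hB4 + (c - α) * hB5 - α * hB3 - α * β * hB1 - β * A1 * hW
      have hne12 : ¬(A1 = 0 ∧ A2 = 0) := by
        rintro ⟨rfl, rfl⟩
        apply hne
        simp only [mul_zero, zero_sub, sub_zero, mul_eq_zero, hs, or_false] at hB1 hB2 hB3 hB4 hB5
        simp_all
      have hD : (1 + β + α * β) * (α * (1 + α + α * β))
          + (5 * α * c - 1 - α ^ 2) * (β * (1 + α ^ 2 - 5 * α * c)) = 0 := by
        rcases not_and_or.mp hne12 with hA1 | hA2
        · have hDA : ((1 + β + α * β) * (α * (1 + α + α * β))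
              + (5 * α * c - 1 - α ^ 2) * (β * (1 + α ^ 2 - 5 * α * c))) * A1 = 0 := by
            linear_combination (α * (1 + α + α * β)) * hT5 + (5 * α * c - 1 - α ^ 2) * hT10
          exact (mul_eq_zero.mp hDA).resolve_right hA1
        · have hDA : ((1 + β + α * β) * (α * (1 + α + α * β))
              + (5 * α * c - 1 - α ^ 2) * (β * (1 + α ^ 2 - 5 * α * c))) * A2 = 0 := by
            linear_combination (-(β * (1 + α ^ 2 - 5 * α * c))) * hT5 + (1 + β + α * β) * hT10
          exact (mul_eq_zero.mp hDA).resolve_right hA2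
      rw [K] at hD
      have hst : 25 * c ^ 2 - 20 * (Real.cos θ1 : ℂ) * c
          - 8 * (Real.cos (θ1 / 2) : ℂ) * (Real.cos (θ2 / 2) : ℂ)
              * (Real.cos ((θ1 - θ2) / 2) : ℂ)
          + 4 * (Real.cos θ1 : ℂ) ^ 2 - 1 = 0 := by
        have h0 := hD
        rw [neg_mul, neg_eq_zero, mul_eq_zero] at h0
        rcases h0 with h0 | h0
        · exact absurd h0 (mul_ne_zero (pow_ne_zero _ hα) hβ)
        · exact h0
      rw [hst, mul_zero]
    · intro hR
      have hst : 25 * c ^ 2 - 20 * (Real.cos θ1 : ℂ) * c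
          - 8 * (Real.cos (θ1 / 2) : ℂ) * (Real.cos (θ2 / 2) : ℂ)
              * (Real.cos ((θ1 - θ2) / 2) : ℂ)
          + 4 * (Real.cos θ1 : ℂ) ^ 2 - 1 = 0 :=
        (mul_eq_zero.mp hR).resolve_left (pow_ne_zero _ hs)
      have hD : (1 + β + α * β) * (α * (1 + α + α * β))
          + (5 * α * c - 1 - α ^ 2) * (β * (1 + α ^ 2 - 5 * α * c)) = 0 := by
        rw [K, hst, mul_zero]
      by_cases hv : (1 : ℂ) + β + α * β = 0
      · have hsq : β * ((1 : ℂ) + α ^ 2 - 5 * α * c) ^ 2 = 0 := by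
          linear_combination (α * (1 + α + α * β)) * hv - hD
        have hq : (1 : ℂ) + α ^ 2 - 5 * α * c = 0 := by
          have h2 := (mul_eq_zero.mp hsq).resolve_left hβ
          exact pow_eq_zero_iff two_ne_zero |>.mp h2
        exact construct_sol θ1 θ2 s c' c 1 0 hW hs (by simp)
          (by rw [← hαdef, ← hβdef]; linear_combination hv)
          (by rw [← hαdef, ← hβdef]; linear_combination β * hq)
      · exact construct_sol θ1 θ2 s c' c (5 * α * c - 1 - α ^ 2) (1 + β + α * β) hW hs
          (fun h => hv h.2)
          (by rw [← hαdef, ← hβdef]; ring)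
          (by rw [← hαdef, ← hβdef]; linear_combination hD)
end

section
/- Let θ1, θ2 ∈ ℝ. Let c, s, c', s' be complex numbers satisfying c·s' − s·c' = 1 and c = s'. Then there exists a nonzero vector (A1, ..., A6, B1, ..., B6) ∈ ℂ¹² satisfying the homogeneous system: A1 = A4 = A5; B1 + B4 + B5 = 0; A6 = A1·c + B1·s = A2·c + B2·s; B6 − (A1·c' + B1·s') − (A2·c' + B2·s') = 0; A2 = A3 = exp(i·θ1)·(A5·c + B5·s); B2 + B3 − exp(i·θ1)·(A5·c' + B5·s') = 0; exp(i·θ2)·(A6·c + B6·s) = A3·c + B3·s = A4·c + B4·s; and exp(i·θ2)·(A6·c' + B6·s') + (A3·c' + B3·s') + (A4·c' + B4·s') = 0, if and only if s²·(81·s'⁴ − 54·s'² − 12·s'·(cos(θ1) + cos(θ2)) + 1 − 4·cos(θ1)·cos(θ2)) = 0. (This is the dispersion relation of the periodic quantum graph associated with the truncated square tiling (4,8²) with identical even edge potentials.) -/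
private lemma fs_3_0 : Fin.succ (0 : Fin 2) = (1 : Fin 3) := by decide
private lemma fc_3_0 : Fin.castSucc (0 : Fin 2) = (0 : Fin 3) := by decide
private lemma fa_3_0_0 : Fin.succAbove (0 : Fin 3) (0 : Fin 2) = (1 : Fin 3) := by decide
private lemma fa_3_1_0 : Fin.succAbove (1 : Fin 3) (0 : Fin 2) = (0 : Fin 3) := by decide
private lemma fa_3_2_0 : Fin.succAbove (2 : Fin 3) (0 : Fin 2) = (0 : Fin 3) := by decide
private lemma fs_3_1 : Fin.succ (1 : Fin 2) = (2 : Fin 3) := by decide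
private lemma fc_3_1 : Fin.castSucc (1 : Fin 2) = (1 : Fin 3) := by decide
private lemma fa_3_0_1 : Fin.succAbove (0 : Fin 3) (1 : Fin 2) = (2 : Fin 3) := by decide
private lemma fa_3_1_1 : Fin.succAbove (1 : Fin 3) (1 : Fin 2) = (2 : Fin 3) := by decide
private lemma fa_3_2_1 : Fin.succAbove (2 : Fin 3) (1 : Fin 2) = (1 : Fin 3) := by decide
private lemma fs_4_0 : Fin.succ (0 : Fin 3) = (1 : Fin 4) := by decide
private lemma fc_4_0 : Fin.castSucc (0 : Fin 3) = (0 : Fin 4) := by decide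
private lemma fa_4_0_0 : Fin.succAbove (0 : Fin 4) (0 : Fin 3) = (1 : Fin 4) := by decide
private lemma fa_4_1_0 : Fin.succAbove (1 : Fin 4) (0 : Fin 3) = (0 : Fin 4) := by decide
private lemma fa_4_2_0 : Fin.succAbove (2 : Fin 4) (0 : Fin 3) = (0 : Fin 4) := by decide
private lemma fa_4_3_0 : Fin.succAbove (3 : Fin 4) (0 : Fin 3) = (0 : Fin 4) := by decide
private lemma fs_4_1 : Fin.succ (1 : Fin 3) = (2 : Fin 4) := by decide
private lemma fc_4_1 : Fin.castSucc (1 : Fin 3) = (1 : Fin 4) := by decide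
private lemma fa_4_0_1 : Fin.succAbove (0 : Fin 4) (1 : Fin 3) = (2 : Fin 4) := by decide
private lemma fa_4_1_1 : Fin.succAbove (1 : Fin 4) (1 : Fin 3) = (2 : Fin 4) := by decide
private lemma fa_4_2_1 : Fin.succAbove (2 : Fin 4) (1 : Fin 3) = (1 : Fin 4) := by decide
private lemma fa_4_3_1 : Fin.succAbove (3 : Fin 4) (1 : Fin 3) = (1 : Fin 4) := by decide
private lemma fs_4_2 : Fin.succ (2 : Fin 3) = (3 : Fin 4) := by decide
private lemma fc_4_2 : Fin.castSucc (2 : Fin 3) = (2 : Fin 4) := by decide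
private lemma fa_4_0_2 : Fin.succAbove (0 : Fin 4) (2 : Fin 3) = (3 : Fin 4) := by decide
private lemma fa_4_1_2 : Fin.succAbove (1 : Fin 4) (2 : Fin 3) = (3 : Fin 4) := by decide
private lemma fa_4_2_2 : Fin.succAbove (2 : Fin 4) (2 : Fin 3) = (3 : Fin 4) := by decide
private lemma fa_4_3_2 : Fin.succAbove (3 : Fin 4) (2 : Fin 3) = (2 : Fin 4) := by decide
private lemma fs_5_0 : Fin.succ (0 : Fin 4) = (1 : Fin 5) := by decide
private lemma fc_5_0 : Fin.castSucc (0 : Fin 4) = (0 : Fin 5) := by decide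
private lemma fa_5_0_0 : Fin.succAbove (0 : Fin 5) (0 : Fin 4) = (1 : Fin 5) := by decide
private lemma fa_5_1_0 : Fin.succAbove (1 : Fin 5) (0 : Fin 4) = (0 : Fin 5) := by decide
private lemma fa_5_2_0 : Fin.succAbove (2 : Fin 5) (0 : Fin 4) = (0 : Fin 5) := by decide
private lemma fa_5_3_0 : Fin.succAbove (3 : Fin 5) (0 : Fin 4) = (0 : Fin 5) := by decide
private lemma fa_5_4_0 : Fin.succAbove (4 : Fin 5) (0 : Fin 4) = (0 : Fin 5) := by decide
private lemma fs_5_1 : Fin.succ (1 : Fin 4) = (2 : Fin 5) := by decide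
private lemma fc_5_1 : Fin.castSucc (1 : Fin 4) = (1 : Fin 5) := by decide
private lemma fa_5_0_1 : Fin.succAbove (0 : Fin 5) (1 : Fin 4) = (2 : Fin 5) := by decide
private lemma fa_5_1_1 : Fin.succAbove (1 : Fin 5) (1 : Fin 4) = (2 : Fin 5) := by decide
private lemma fa_5_2_1 : Fin.succAbove (2 : Fin 5) (1 : Fin 4) = (1 : Fin 5) := by decide
private lemma fa_5_3_1 : Fin.succAbove (3 : Fin 5) (1 : Fin 4) = (1 : Fin 5) := by decide
private lemma fa_5_4_1 : Fin.succAbove (4 : Fin 5) (1 : Fin 4) = (1 : Fin 5) := by decide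
private lemma fs_5_2 : Fin.succ (2 : Fin 4) = (3 : Fin 5) := by decide
private lemma fc_5_2 : Fin.castSucc (2 : Fin 4) = (2 : Fin 5) := by decide
private lemma fa_5_0_2 : Fin.succAbove (0 : Fin 5) (2 : Fin 4) = (3 : Fin 5) := by decide
private lemma fa_5_1_2 : Fin.succAbove (1 : Fin 5) (2 : Fin 4) = (3 : Fin 5) := by decide
private lemma fa_5_2_2 : Fin.succAbove (2 : Fin 5) (2 : Fin 4) = (3 : Fin 5) := by decide
private lemma fa_5_3_2 : Fin.succAbove (3 : Fin 5) (2 : Fin 4) = (2 : Fin 5) := by decide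
private lemma fa_5_4_2 : Fin.succAbove (4 : Fin 5) (2 : Fin 4) = (2 : Fin 5) := by decide
private lemma fs_5_3 : Fin.succ (3 : Fin 4) = (4 : Fin 5) := by decide
private lemma fc_5_3 : Fin.castSucc (3 : Fin 4) = (3 : Fin 5) := by decide
private lemma fa_5_0_3 : Fin.succAbove (0 : Fin 5) (3 : Fin 4) = (4 : Fin 5) := by decide
private lemma fa_5_1_3 : Fin.succAbove (1 : Fin 5) (3 : Fin 4) = (4 : Fin 5) := by decide
private lemma fa_5_2_3 : Fin.succAbove (2 : Fin 5) (3 : Fin 4) = (4 : Fin 5) := by decide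
private lemma fa_5_3_3 : Fin.succAbove (3 : Fin 5) (3 : Fin 4) = (4 : Fin 5) := by decide
private lemma fa_5_4_3 : Fin.succAbove (4 : Fin 5) (3 : Fin 4) = (3 : Fin 5) := by decide
set_option maxHeartbeats 1000000 in
private lemma det_fin_four' {R : Type*} [CommRing R] (A : Matrix (Fin 4) (Fin 4) R) : A.det = A 0 0*A 1 1*A 2 2*A 3 3 - A 0 0*A 1 1*A 2 3*A 3 2 - A 0 0*A 1 2*A 2 1*A 3 3 + A 0 0*A 1 2*A 2 3*A 3 1 + A 0 0*A 1 3*A 2 1*A 3 2 - A 0 0*A 1 3*A 2 2*A 3 1 - A 0 1*A 1 0*A 2 2*A 3 3 + A 0 1*A 1 0*A 2 3*A 3 2 + A 0 1*A 1 2*A 2 0*A 3 3 - A 0 1*A 1 2*A 2 3*A 3 0 - A 0 1*A 1 3*A 2 0*A 3 2 + A 0 1*A 1 3*A 2 2*A 3 0 + A 0 2*A 1 0*A 2 1*A 3 3 - A 0 2*A 1 0*A 2 3*A 3 1 - A 0 2*A 1 1*A 2 0*A 3 3 + A 0 2*A 1 1*A 2 3*A 3 0 + A 0 2*A 1 3*A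 2 0*A 3 1 - A 0 2*A 1 3*A 2 1*A 3 0 - A 0 3*A 1 0*A 2 1*A 3 2 + A 0 3*A 1 0*A 2 2*A 3 1 + A 0 3*A 1 1*A 2 0*A 3 2 - A 0 3*A 1 1*A 2 2*A 3 0 - A 0 3*A 1 2*A 2 0*A 3 1 + A 0 3*A 1 2*A 2 1*A 3 0 := by
  rw [Matrix.det_succ_row_zero]
  simp only [Fin.sum_univ_succ, Finset.univ_unique, Finset.sum_singleton, Fin.default_eq_zero,
    Matrix.det_fin_three, Matrix.submatrix_apply, Fin.succ_zero_eq_one, Fin.succ_one_eq_two,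
    Fin.zero_succAbove, Fin.val_zero, Fin.val_succ, Fin.val_eq_zero, fs_3_0, fc_3_0, fa_3_0_0, fa_3_1_0, fa_3_2_0, fs_3_1, fc_3_1, fa_3_0_1, fa_3_1_1, fa_3_2_1, fs_4_0, fc_4_0, fa_4_0_0, fa_4_1_0, fa_4_2_0, fa_4_3_0, fs_4_1, fc_4_1, fa_4_0_1, fa_4_1_1, fa_4_2_1, fa_4_3_1, fs_4_2, fc_4_2, fa_4_0_2, fa_4_1_2, fa_4_2_2, fa_4_3_2, fs_5_0, fc_5_0, fa_5_0_0, fa_5_1_0, fa_5_2_0, fa_5_3_0, fa_5_4_0, fs_5_1, fc_5_1, fa_5_0_1, fa_5_1_1, fa_5_2_1, fa_5_3_1, fa_5_4_1, fs_5_2, fc_5_2, fa_5_0_2, fa_5_1_2, fa_5_2_2, fa_5_3_2, fa_5_4_2, fs_5_3, fc_5_3, fa_5_0_3, fa_5_1_3, fa_5_2_3, fa_5_3_3, fa_5_4_3]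
  push_cast [Fin.val_zero, Fin.val_succ]
  ring

set_option maxHeartbeats 2000000 in
private lemma det_fin_five' {R : Type*} [CommRing R] (A : Matrix (Fin 5) (Fin 5) R) : A.det = A 0 0*A 1 1*A 2 2*A 3 3*A 4 4 - A 0 0*A 1 1*A 2 2*A 3 4*A 4 3 - A 0 0*A 1 1*A 2 3*A 3 2*A 4 4 + A 0 0*A 1 1*A 2 3*A 3 4*A 4 2 + A 0 0*A 1 1*A 2 4*A 3 2*A 4 3 - A 0 0*A 1 1*A 2 4*A 3 3*A 4 2 - A 0 0*A 1 2*A 2 1*A 3 3*A 4 4 + A 0 0*A 1 2*A 2 1*A 3 4*A 4 3 + A 0 0*A 1 2*A 2 3*A 3 1*A 4 4 - A 0 0*A 1 2*A 2 3*A 3 4*A 4 1 - A 0 0*A 1 2*A 2 4*A 3 1*A 4 3 + A 0 0*A 1 2*A 2 4*A 3 3*A 4 1 + A 0 0*A 1 3*A 2 1*A 3 2*A 4 4 - A 0 0*A 1 3*A 2 1*A 3 4*A 4 2 - A 0 0*A 1 3*A 2 2*A 3 1*A 4 4 + A 0 0*A 1 3*A 2 2*A 3 4*A 4 1 + A 0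 0*A 1 3*A 2 4*A 3 1*A 4 2 - A 0 0*A 1 3*A 2 4*A 3 2*A 4 1 - A 0 0*A 1 4*A 2 1*A 3 2*A 4 3 + A 0 0*A 1 4*A 2 1*A 3 3*A 4 2 + A 0 0*A 1 4*A 2 2*A 3 1*A 4 3 - A 0 0*A 1 4*A 2 2*A 3 3*A 4 1 - A 0 0*A 1 4*A 2 3*A 3 1*A 4 2 + A 0 0*A 1 4*A 2 3*A 3 2*A 4 1 - A 0 1*A 1 0*A 2 2*A 3 3*A 4 4 + A 0 1*A 1 0*A 2 2*A 3 4*A 4 3 + A 0 1*A 1 0*A 2 3*A 3 2*A 4 4 - A 0 1*A 1 0*A 2 3*A 3 4*A 4 2 - A 0 1*A 1 0*A 2 4*A 3 2*A 4 3 + A 0 1*A 1 0*A 2 4*A 3 3*A 4 2 + A 0 1*A 1 2*A 2 0*A 3 3*A 4 4 - A 0 1*A 1 2*A 2 0*A 3 4*A 4 3 - A 0 1*A 1 2*A 2 3*A 3 0*A 4 4 + A 0 1*A 1 2*A 2 3*A 3 4*A 4 0 + A 0 1*A 1 2*A 2 4*A 3 0*A 4 3 - A 0 1*A 1 2*A 2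 4*A 3 3*A 4 0 - A 0 1*A 1 3*A 2 0*A 3 2*A 4 4 + A 0 1*A 1 3*A 2 0*A 3 4*A 4 2 + A 0 1*A 1 3*A 2 2*A 3 0*A 4 4 - A 0 1*A 1 3*A 2 2*A 3 4*A 4 0 - A 0 1*A 1 3*A 2 4*A 3 0*A 4 2 + A 0 1*A 1 3*A 2 4*A 3 2*A 4 0 + A 0 1*A 1 4*A 2 0*A 3 2*A 4 3 - A 0 1*A 1 4*A 2 0*A 3 3*A 4 2 - A 0 1*A 1 4*A 2 2*A 3 0*A 4 3 + A 0 1*A 1 4*A 2 2*A 3 3*A 4 0 + A 0 1*A 1 4*A 2 3*A 3 0*A 4 2 - A 0 1*A 1 4*A 2 3*A 3 2*A 4 0 + A 0 2*A 1 0*A 2 1*A 3 3*A 4 4 - A 0 2*A 1 0*A 2 1*A 3 4*A 4 3 - A 0 2*A 1 0*A 2 3*A 3 1*A 4 4 + A 0 2*A 1 0*A 2 3*A 3 4*A 4 1 + A 0 2*A 1 0*A 2 4*A 3 1*A 4 3 - A 0 2*A 1 0*A 2 4*A 3 3*A 4 1 - A 0 2*A 1 1*A 2 0*A 3 3*A 4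 4 + A 0 2*A 1 1*A 2 0*A 3 4*A 4 3 + A 0 2*A 1 1*A 2 3*A 3 0*A 4 4 - A 0 2*A 1 1*A 2 3*A 3 4*A 4 0 - A 0 2*A 1 1*A 2 4*A 3 0*A 4 3 + A 0 2*A 1 1*A 2 4*A 3 3*A 4 0 + A 0 2*A 1 3*A 2 0*A 3 1*A 4 4 - A 0 2*A 1 3*A 2 0*A 3 4*A 4 1 - A 0 2*A 1 3*A 2 1*A 3 0*A 4 4 + A 0 2*A 1 3*A 2 1*A 3 4*A 4 0 + A 0 2*A 1 3*A 2 4*A 3 0*A 4 1 - A 0 2*A 1 3*A 2 4*A 3 1*A 4 0 - A 0 2*A 1 4*A 2 0*A 3 1*A 4 3 + A 0 2*A 1 4*A 2 0*A 3 3*A 4 1 + A 0 2*A 1 4*A 2 1*A 3 0*A 4 3 - A 0 2*A 1 4*A 2 1*A 3 3*A 4 0 - A 0 2*A 1 4*A 2 3*A 3 0*A 4 1 + A 0 2*A 1 4*A 2 3*A 3 1*A 4 0 - A 0 3*A 1 0*A 2 1*A 3 2*A 4 4 + A 0 3*A 1 0*A 2 1*A 3 4*A 4 2 + A 0 3*A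 1 0*A 2 2*A 3 1*A 4 4 - A 0 3*A 1 0*A 2 2*A 3 4*A 4 1 - A 0 3*A 1 0*A 2 4*A 3 1*A 4 2 + A 0 3*A 1 0*A 2 4*A 3 2*A 4 1 + A 0 3*A 1 1*A 2 0*A 3 2*A 4 4 - A 0 3*A 1 1*A 2 0*A 3 4*A 4 2 - A 0 3*A 1 1*A 2 2*A 3 0*A 4 4 + A 0 3*A 1 1*A 2 2*A 3 4*A 4 0 + A 0 3*A 1 1*A 2 4*A 3 0*A 4 2 - A 0 3*A 1 1*A 2 4*A 3 2*A 4 0 - A 0 3*A 1 2*A 2 0*A 3 1*A 4 4 + A 0 3*A 1 2*A 2 0*A 3 4*A 4 1 + A 0 3*A 1 2*A 2 1*A 3 0*A 4 4 - A 0 3*A 1 2*A 2 1*A 3 4*A 4 0 - A 0 3*A 1 2*A 2 4*A 3 0*A 4 1 + A 0 3*A 1 2*A 2 4*A 3 1*A 4 0 + A 0 3*A 1 4*A 2 0*A 3 1*A 4 2 - A 0 3*A 1 4*A 2 0*A 3 2*A 4 1 - A 0 3*A 1 4*A 2 1*A 3 0*A 4 2 + A 0 3*A 1 4*A 2 1*A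 3 2*A 4 0 + A 0 3*A 1 4*A 2 2*A 3 0*A 4 1 - A 0 3*A 1 4*A 2 2*A 3 1*A 4 0 + A 0 4*A 1 0*A 2 1*A 3 2*A 4 3 - A 0 4*A 1 0*A 2 1*A 3 3*A 4 2 - A 0 4*A 1 0*A 2 2*A 3 1*A 4 3 + A 0 4*A 1 0*A 2 2*A 3 3*A 4 1 + A 0 4*A 1 0*A 2 3*A 3 1*A 4 2 - A 0 4*A 1 0*A 2 3*A 3 2*A 4 1 - A 0 4*A 1 1*A 2 0*A 3 2*A 4 3 + A 0 4*A 1 1*A 2 0*A 3 3*A 4 2 + A 0 4*A 1 1*A 2 2*A 3 0*A 4 3 - A 0 4*A 1 1*A 2 2*A 3 3*A 4 0 - A 0 4*A 1 1*A 2 3*A 3 0*A 4 2 + A 0 4*A 1 1*A 2 3*A 3 2*A 4 0 + A 0 4*A 1 2*A 2 0*A 3 1*A 4 3 - A 0 4*A 1 2*A 2 0*A 3 3*A 4 1 - A 0 4*A 1 2*A 2 1*A 3 0*A 4 3 + A 0 4*A 1 2*A 2 1*A 3 3*A 4 0 + A 0 4*A 1 2*A 2 3*A 3 0*A 4 1 -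 A 0 4*A 1 2*A 2 3*A 3 1*A 4 0 - A 0 4*A 1 3*A 2 0*A 3 1*A 4 2 + A 0 4*A 1 3*A 2 0*A 3 2*A 4 1 + A 0 4*A 1 3*A 2 1*A 3 0*A 4 2 - A 0 4*A 1 3*A 2 1*A 3 2*A 4 0 - A 0 4*A 1 3*A 2 2*A 3 0*A 4 1 + A 0 4*A 1 3*A 2 2*A 3 1*A 4 0 := by
  rw [Matrix.det_succ_row_zero]
  simp only [Fin.sum_univ_succ, Finset.univ_unique, Finset.sum_singleton, Fin.default_eq_zero,
    det_fin_four', Matrix.submatrix_apply, Fin.succ_zero_eq_one, Fin.succ_one_eq_two,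
    Fin.zero_succAbove, Fin.val_zero, Fin.val_succ, Fin.val_eq_zero, fs_3_0, fc_3_0, fa_3_0_0, fa_3_1_0, fa_3_2_0, fs_3_1, fc_3_1, fa_3_0_1, fa_3_1_1, fa_3_2_1, fs_4_0, fc_4_0, fa_4_0_0, fa_4_1_0, fa_4_2_0, fa_4_3_0, fs_4_1, fc_4_1, fa_4_0_1, fa_4_1_1, fa_4_2_1, fa_4_3_1, fs_4_2, fc_4_2, fa_4_0_2, fa_4_1_2, fa_4_2_2, fa_4_3_2, fs_5_0, fc_5_0, fa_5_0_0, fa_5_1_0, fa_5_2_0, fa_5_3_0, fa_5_4_0, fs_5_1, fc_5_1, fa_5_0_1, fa_5_1_1, fa_5_2_1, fa_5_3_1, fa_5_4_1, fs_5_2, fc_5_2, fa_5_0_2, fa_5_1_2, fa_5_2_2, fa_5_3_2, fa_5_4_2, fs_5_3, fc_5_3, fa_5_0_3, fa_5_1_3, fa_5_2_3, fa_5_3_3, fa_5_4_3]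
  push_cast [Fin.val_zero, Fin.val_succ]
  ring

private lemma fin5_mk2 (h : 2 < 5) : (⟨2, h⟩ : Fin 5) = (2 : Fin 5) := rfl
private lemma fin5_mk3 (h : 3 < 5) : (⟨3, h⟩ : Fin 5) = (3 : Fin 5) := rfl
private lemma fin5_mk4 (h : 4 < 5) : (⟨4, h⟩ : Fin 5) = (4 : Fin 5) := rfl

set_option maxHeartbeats 2000000 in
/-- Dispersion relation of the periodic quantum graph associated with the
truncated square tiling `(4,8²)` with identical even edge potentials. -/
theorem truncated_square_tiling_dispersion_relation
    (θ1 θ2 : ℝ) (c s c' s' : ℂ)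
    (hW : c * s' - s * c' = 1) (hE : c = s') :
    (∃ A1 A2 A3 A4 A5 A6 B1 B2 B3 B4 B5 B6 : ℂ,
      (A1, A2, A3, A4, A5, A6, B1, B2, B3, B4, B5, B6)
        ≠ (0, 0, 0, 0, 0, 0, 0, 0, 0, 0, 0, 0) ∧
      (A1 = A4 ∧ A4 = A5 ∧
       B1 + B4 + B5 = 0 ∧
       A6 = A1 * c + B1 * s ∧
       A1 * c + B1 * s = A2 * c + B2 * s ∧
       B6 - (A1 * c' + B1 * s') - (A2 * c' + B2 * s') = 0 ∧
       A2 = A3 ∧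
       A3 = Complex.exp (Complex.I * θ1) * (A5 * c + B5 * s) ∧
       B2 + B3 - Complex.exp (Complex.I * θ1) * (A5 * c' + B5 * s') = 0 ∧
       Complex.exp (Complex.I * θ2) * (A6 * c + B6 * s) = A3 * c + B3 * s ∧
       A3 * c + B3 * s = A4 * c + B4 * s ∧
       Complex.exp (Complex.I * θ2) * (A6 * c' + B6 * s')
         + (A3 * c' + B3 * s') + (A4 * c' + B4 * s') = 0))
    ↔ s ^ 2 * (81 * s' ^ 4 - 54 * s' ^ 2
        - 12 * s' * ((Real.cos θ1 : ℂ) + (Real.cos θ2 : ℂ))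
        + 1 - 4 * (Real.cos θ1 : ℂ) * (Real.cos θ2 : ℂ)) = 0 := by
  subst hE
  have hc1 : Complex.exp (Complex.I * θ1) ^ 2 + 1
      = 2 * (Real.cos θ1 : ℂ) * Complex.exp (Complex.I * θ1) := by
    rw [mul_comm Complex.I (θ1 : ℂ), Complex.exp_mul_I, Complex.ofReal_cos]
    linear_combination (Complex.sin (θ1 : ℂ))^2 * Complex.I_sq
      - Complex.sin_sq_add_cos_sq (θ1 : ℂ)
  have hc2 : Complex.exp (Complex.I * θ2) ^ 2 + 1
      = 2 * (Real.cos θ2 : ℂ) * Complex.exp (Complex.I * θ2) := by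
    rw [mul_comm Complex.I (θ2 : ℂ), Complex.exp_mul_I, Complex.ofReal_cos]
    linear_combination (Complex.sin (θ2 : ℂ))^2 * Complex.I_sq
      - Complex.sin_sq_add_cos_sq (θ2 : ℂ)
  set E1 : ℂ := Complex.exp (Complex.I * θ1) with hE1
  set E2 : ℂ := Complex.exp (Complex.I * θ2) with hE2
  set x1 : ℂ := (Real.cos θ1 : ℂ) with hx1
  set x2 : ℂ := (Real.cos θ2 : ℂ) with hx2
  have he1 : E1 ≠ 0 := Complex.exp_ne_zero _
  have he2 : E2 ≠ 0 := Complex.exp_ne_zero _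
  set N : Matrix (Fin 5) (Fin 5) ℂ :=
    !![c, -c, s, -s, 0;
       -(c*E1), 1, s*E1, 0, s*E1;
       c^2*E2 + s*c'*E2 - s*c'*E1, -c + s*c'*E2, 2*(s*c*E2) + s*c*E1, s + s*c*E2, s*c*E1;
       -c + s*c'*E1, c, -(s*c*E1), -s, -s - s*c*E1;
       c' + 2*(c*c'*E2) + c*c'*E1, c' + c*c'*E2, c^2*E2 - c^2*E1 + s*c'*E2, -c + c^2*E2, c - c^2*E1]
    with hN
  have hdet : N.det
      = E1 * E2 * (s ^ 2 * (81 * c ^ 4 - 54 * c ^ 2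
          - 12 * c * (x1 + x2) + 1 - 4 * x1 * x2)) := by
    rw [hN, det_fin_five']
    simp only [Matrix.cons_val', Matrix.cons_val_zero, Matrix.cons_val_one,
      Matrix.cons_val_two, Matrix.cons_val_three, Matrix.cons_val_four,
      Matrix.head_cons, Matrix.tail_cons, Matrix.head_fin_const,
      Matrix.cons_val_fin_one, Matrix.empty_val', Matrix.of_apply]
    linear_combination
      ((-1)*s^2 + (-1)*s^2*E2^2 + s^2*E1*E2 + (-1)*s^2*E1^2 + (-1)*s^2*E1^2*E2^2
        + (-6)*s^2*c*E2 + (-6)*s^2*c*E1 + (-6)*s^2*c*E1*E2^2 + (-6)*s^2*c*E1^2*E2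
        + (-1)*s^2*c^2*E2^2 + (-53)*s^2*c^2*E1*E2 + (-1)*s^2*c^2*E1^2
        + (-1)*s^2*c^2*E1^2*E2^2 + (-6)*s^2*c^3*E1*E2^2 + (-6)*s^2*c^3*E1^2*E2
        + (-1)*s^2*c^4*E1^2*E2^2 + s^3*c'*E2^2 + (-1)*s^3*c'*E1*E2 + s^3*c'*E1^2
        + s^3*c'*E1^2*E2^2 + 6*s^3*c*c'*E1*E2^2 + 6*s^3*c*c'*E1^2*E2
        + 2*s^3*c^2*c'*E1^2*E2^2 + (-1)*s^4*c'^2*E1^2*E2^2) * hW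
      + ((-1)*s^2 + (-1)*s^2*E2^2 + (-6)*s^2*c*E2) * hc1
      + ((-2)*s^2*E1*x1 + (-6)*s^2*c*E1) * hc2
  have key : (∃ v : Fin 5 → ℂ, v ≠ 0 ∧ N.mulVec v = 0)
      ↔ s ^ 2 * (81 * c ^ 4 - 54 * c ^ 2 - 12 * c * (x1 + x2)
          + 1 - 4 * x1 * x2) = 0 := by
    rw [Matrix.exists_mulVec_eq_zero_iff, hdet, mul_eq_zero, mul_eq_zero]
    simp [he1, he2]
  rw [← key]
  constructor
  · rintro ⟨A1, A2, A3, A4, A5, A6, B1, B2, B3, B4, B5, B6, hne,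
      h1, h2, h3, h4, h5, h6, h7, h8, h9, h10, h11, h12⟩
    subst h1
    subst h2
    subst h7
    subst h4
    have hB5 : B5 = -B1 - B4 := by linear_combination h3
    subst hB5
    have hB6 : B6 = A1 * c' + B1 * c + (A2 * c' + B2 * c) := by linear_combination h6
    subst hB6
    have hB3 : B3 = E1 * (A1 * c' + (-B1 - B4) * c) - B2 := by linear_combination h9
    subst hB3
    refine ⟨![A1, A2, B1, B2, B4], ?_, ?_⟩
    · intro hv
      have e0 : A1 = 0 := by simpa using congrFun hv 0
      have e1 : A2 = 0 := by simpa using congrFun hv 1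
      have e2 : B1 = 0 := by simpa using congrFun hv 2
      have e3 : B2 = 0 := by simpa using congrFun hv 3
      have e4 : B4 = 0 := by simpa using congrFun hv 4
      subst e0; subst e1; subst e2; subst e3; subst e4
      exact hne (by norm_num)
    · funext i
      fin_cases i <;>
        simp only [hN, Matrix.mulVec, dotProduct, Fin.sum_univ_five,
          Matrix.cons_val', Matrix.cons_val_zero, Matrix.cons_val_one,
          Matrix.cons_val_two, Matrix.cons_val_three, Matrix.cons_val_four,
          Matrix.head_cons, Matrix.tail_cons, Matrix.head_fin_const,
          Matrix.cons_val_fin_one, Matrix.empty_val', Matrix.of_apply,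
          Fin.isValue, Pi.zero_apply, Fin.zero_eta, Fin.mk_one, fin5_mk2, fin5_mk3, fin5_mk4]
      · linear_combination h5
      · linear_combination h8
      · linear_combination h10
      · linear_combination h11
      · linear_combination h12
  · rintro ⟨v, hv0, hmv⟩
    have m0 : N.mulVec v 0 = 0 := congrFun hmv 0
    have m1 : N.mulVec v 1 = 0 := congrFun hmv 1
    have m2 : N.mulVec v 2 = 0 := congrFun hmv 2
    have m3 : N.mulVec v 3 = 0 := congrFun hmv 3
    have m4 : N.mulVec v 4 = 0 := congrFun hmv 4
    simp only [hN, Matrix.mulVec, dotProduct, Fin.sum_univ_five,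
      Matrix.cons_val', Matrix.cons_val_zero, Matrix.cons_val_one,
      Matrix.cons_val_two, Matrix.cons_val_three, Matrix.cons_val_four,
      Matrix.head_cons, Matrix.tail_cons, Matrix.head_fin_const,
      Matrix.cons_val_fin_one, Matrix.empty_val', Matrix.of_apply,
      Fin.isValue] at m0 m1 m2 m3 m4
    refine ⟨v 0, v 1, v 1, v 0, v 0, v 0 * c + v 2 * s, v 2, v 3,
      E1 * (v 0 * c' + (-(v 2) - v 4) * c) - v 3, v 4, -(v 2) - v 4,
      v 0 * c' + v 2 * c + (v 1 * c' + v 3 * c), ?_,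
      rfl, rfl, by ring, rfl, by linear_combination m0, by ring, rfl,
      by linear_combination m1, by ring, by linear_combination m2,
      by linear_combination m3, by linear_combination m4⟩
    intro ht
    apply hv0
    simp only [Prod.mk.injEq] at ht
    obtain ⟨t1, t2, t3, t4, t5, t6, t7, t8, t9, t10, t11, t12⟩ := ht
    funext i
    fin_cases i
    · exact t1
    · exact t2
    · exact t7
    · exact t8
    · exact t10
end

section
/- Let θ1, θ2 ∈ ℝ. Let c, s, c', s' be complex numbers satisfying c·s' − s·c' = 1 and c = s'. Then there exists a nonzero vector (A1, ..., A6, B1, ..., B6) ∈ ℂ¹² satisfying the homogeneous system: A1 = A3 = A4 = A6; B1 + B3 + B4 + B6 = 0; A2·c + B2·s = A3·c + B3·s = exp(i·θ1)·(A4·c + B4·s) = exp(i·θ1)·(A5·c + B5·s); (A2·c' + B2·s') + (A3·c' + B3·s') + exp(i·θ1)·(A4·c' + B4·s') + exp(i·θ1)·(A5·c' + B5·s') = 0; A2 = exp(i·θ2)·A5 = exp(i·θ2)·(A6·c + B6·s) = A1·c + B1·s; and −B2 − exp(i·θ2)·B5 + exp(i·θ2)·(A6·c' + B6·s') + (A1·c'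 + B1·s') = 0, if and only if s³·(2·s' + 1)·(2·s'² − s' − cos(θ1/2)·cos(θ2/2)·cos((θ1−θ2)/2)) = 0. (This is the dispersion relation of the periodic quantum graph associated with the trihexagonal tiling (3,6,3,6) with identical even edge potentials.) -/
/-!
For `s ≠ 0` a solution on an edge is determined by its two end values `u, v`: it has
`B = (v - c u) / s`, and by the Wronskian identity (with `c = s'`) its derivative at the far end
is `(c v - u) / s`. The Kirchhoff conditions therefore become the eigenvalue equation
`H f = 4 c f` for the vector `f` of values at the three vertices of a fundamental domain, where
`H` is the Bloch adjacency matrix of the kagome lattice (the 1-skeleton of the tiling).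
Its characteristic polynomial factors as `(μ + 2) (μ² - 2 μ - 8 K)`, with
`K = cos (θ₁/2) cos (θ₂/2) cos ((θ₁ - θ₂)/2)` coming from `1 + e^{iθ} = 2 cos (θ/2) e^{iθ/2}`.
For `s = 0` one has `c = ±1`, and there are solutions vanishing at every vertex.
-/

open Complex Matrix

lemma one_add_exp_I_mul (x : ℂ) : 1 + exp (I * x) = 2 * cos (x / 2) * exp (I * (x / 2)) := by
  have hx : x = 2 * (x / 2) := by ring
  rw [hx, mul_div_cancel_left₀ _ two_ne_zero, mul_comm I, mul_comm I, exp_mul_I, exp_mul_I,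
    cos_two_mul, sin_two_mul]
  ring

lemma one_add_exp_mul_one_add_exp_mul_exp_add_exp (θ₁ θ₂ : ℝ) :
    (1 + exp (I * θ₁)) * (1 + exp (I * θ₂)) * (exp (I * θ₁) + exp (I * θ₂))
      = 8 * ((Real.cos (θ₁ / 2) : ℂ) * (Real.cos (θ₂ / 2) : ℂ) * (Real.cos ((θ₁ - θ₂) / 2) : ℂ))
          * exp (I * θ₁) * exp (I * θ₂) := by
  have hsum : exp (I * θ₁) + exp (I * θ₂) = exp (I * θ₂) * (1 + exp (I * (θ₁ - θ₂))) := by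
    rw [mul_one_add, ← exp_add]; ring_nf
  rw [hsum, one_add_exp_I_mul, one_add_exp_I_mul, one_add_exp_I_mul]
  have hphase : exp (I * (θ₁ / 2)) * exp (I * (θ₂ / 2)) * exp (I * ((θ₁ - θ₂) / 2))
      = exp (I * θ₁) := by
    rw [← exp_add, ← exp_add]; ring_nf
  push_cast
  linear_combination (8 * cos (θ₁ / 2) * cos (θ₂ / 2) * cos ((θ₁ - θ₂) / 2) * exp (I * θ₂)) * hphase

/-- `z`, `w` stand for the Floquet multipliers `exp (I * θ1)`, `exp (I * θ2)`; rows and columns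
are indexed by the vertices carrying `A1`, the end of edge 3, and `A2`. -/
noncomputable def kagomeBlochMatrix (z w : ℂ) : Matrix (Fin 3) (Fin 3) ℂ :=
  !![0, 1 + z⁻¹, 1 + w⁻¹;
     1 + z, 0, 1 + z / w;
     1 + w, 1 + w / z, 0]

lemma det_smul_one_sub_kagomeBlochMatrix {z w : ℂ} (hz : z ≠ 0) (hw : w ≠ 0) (μ : ℂ) :
    (μ • 1 - kagomeBlochMatrix z w).det
      = (μ + 2) * (μ ^ 2 - 2 * μ - (1 + z) * (1 + w) * (z + w) / (z * w)) := by
  rw [Matrix.det_fin_three]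
  simp only [kagomeBlochMatrix, Matrix.sub_apply, Matrix.smul_apply, one_apply_eq, smul_eq_mul,
    mul_one, of_apply, cons_val', cons_val_zero, cons_val_fin_one, sub_zero, cons_val_one, cons_val,
    ne_eq, Fin.reduceEq, not_false_eq_true, one_apply_ne, mul_zero, zero_sub, neg_add_rev,
    zero_ne_one, one_ne_zero]
  field_simp
  ring

lemma smul_one_sub_kagomeBlochMatrix_mulVec_eq_zero_iff (z w μ : ℂ) (v : Fin 3 → ℂ) :
    (μ • 1 - kagomeBlochMatrix z w) *ᵥ v = 0 ↔
      μ * v 0 = (1 + z⁻¹) * v 1 + (1 + w⁻¹) * v 2 ∧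
      μ * v 1 = (1 + z) * v 0 + (1 + z / w) * v 2 ∧
      μ * v 2 = (1 + w) * v 0 + (1 + w / z) * v 1 := by
  simp only [kagomeBlochMatrix, funext_iff, mulVec, dotProduct, Matrix.sub_apply,
    Matrix.smul_apply, Matrix.one_apply, smul_eq_mul, mul_ite, mul_one, mul_zero, of_apply, cons_val',
    cons_val_fin_one, Fin.sum_univ_three, cons_val_zero, cons_val_one, cons_val, Pi.zero_apply,
    Fin.forall_fin_succ, ↓reduceIte, sub_zero, zero_ne_one, zero_sub, neg_add_rev, Fin.reduceEq,
    Fin.succ_ne_zero, cons_val_succ, neg_mul, Fin.succ_zero_eq_one, ite_mul, zero_mul,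
    Fin.succ_one_eq_two, IsEmpty.forall_iff, and_true]
  refine and_congr ?_ (and_congr ?_ ?_) <;> constructor <;> intro h <;> linear_combination h

def IsTrihexagonalBlochSolution (z w c s c' s' A1 A2 A3 A4 A5 A6 B1 B2 B3 B4 B5 B6 : ℂ) : Prop :=
  A1 = A3 ∧ A3 = A4 ∧ A4 = A6 ∧
  B1 + B3 + B4 + B6 = 0 ∧
  A2 * c + B2 * s = A3 * c + B3 * s ∧
  A3 * c + B3 * s = z * (A4 * c + B4 * s) ∧
  z * (A4 * c + B4 * s) = z * (A5 * c + B5 * s) ∧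
  (A2 * c' + B2 * s') + (A3 * c' + B3 * s') + z * (A4 * c' + B4 * s')
    + z * (A5 * c' + B5 * s') = 0 ∧
  A2 = w * A5 ∧
  w * A5 = w * (A6 * c + B6 * s) ∧
  w * (A6 * c + B6 * s) = A1 * c + B1 * s ∧
  -B2 - w * B5 + w * (A6 * c' + B6 * s') + (A1 * c' + B1 * s') = 0

section

variable {z w c s c' A1 A2 A3 A4 A5 A6 B1 B2 B3 B4 B5 B6 : ℂ}

theorem IsTrihexagonalBlochSolution.mulVec_eq_zero (hz : z ≠ 0) (hw : w ≠ 0)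
    (hW : c * c - s * c' = 1)
    (h : IsTrihexagonalBlochSolution z w c s c' c A1 A2 A3 A4 A5 A6 B1 B2 B3 B4 B5 B6) :
    ((4 * c) • 1 - kagomeBlochMatrix z w) *ᵥ ![A1, A3 * c + B3 * s, A2] = 0 := by
  obtain ⟨h13, h34, h46, hP, hQ2, hQ4, hQ5, hKQ, hR5, hR6, hR1, hKR⟩ := h
  subst h13 h34 h46 hR5
  have hA5 : A5 = A1 * c + B6 * s := mul_left_cancel₀ hw hR6
  rw [smul_one_sub_kagomeBlochMatrix_mulVec_eq_zero_iff]
  simp only [Matrix.cons_val_zero, Matrix.cons_val_one, Matrix.cons_val_two, Matrix.head_cons,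
    Matrix.tail_cons]
  have hz' : z⁻¹ * (A1 * c + B3 * s) = A1 * c + B4 * s := by rw [hQ4]; field_simp
  have hw' : w⁻¹ * (w * A5) = A5 := by field_simp
  have hzw : z / w * (w * A5) = z * A5 := by field_simp
  have hwz : w / z * (A1 * c + B3 * s) = w * (A1 * c + B4 * s) := by rw [hQ4]; field_simp
  have hQ5' : A1 * c + B4 * s = A5 * c + B5 * s := mul_left_cancel₀ hz hQ5
  -- On each edge `s (A c' + B c) = c (A c + B s) - A`, a multiple of `hW`.
  refine ⟨?_, ?_, ?_⟩
  · linear_combination -hz' - hw' - hR6 - hR1 - hA5 - s * hP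
  · linear_combination s * hKQ + (w * A5 + A1 + z * A1 + z * A5) * hW - c * hQ2 + 2 * c * hQ4
      + c * hQ5 - hzw
  · linear_combination s * hKR + (w * A1 + A1) * hW + hQ2 - w * hQ5' + 2 * w * c * hA5
      + c * hR1 - hwz

theorem IsTrihexagonalBlochSolution.eq_zero_of_vertex_eq_zero (hz : z ≠ 0) (hw : w ≠ 0)
    (hs : s ≠ 0)
    (h : IsTrihexagonalBlochSolution z w c s c' c A1 A2 A3 A4 A5 A6 B1 B2 B3 B4 B5 B6)
    (hv : ![A1, A3 * c + B3 * s, A2] = 0) :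
    (A1, A2, A3, A4, A5, A6, B1, B2, B3, B4, B5, B6) = (0, 0, 0, 0, 0, 0, 0, 0, 0, 0, 0, 0) := by
  obtain ⟨h13, h34, h46, -, hQ2, hQ4, hQ5, -, hR5, hR6, hR1, -⟩ := h
  have hA1 : A1 = 0 := congrFun hv 0
  have hq : A3 * c + B3 * s = 0 := congrFun hv 1
  have hA2 : A2 = 0 := congrFun hv 2
  subst h13 h34 h46 hA1 hA2
  have hA5 : A5 = 0 := by simpa [hw] using hR5.symm
  subst hA5
  have hB3 : B3 = 0 := by simpa [hs] using hq
  have hB2 : B2 = 0 := by simpa [hs, hB3] using hQ2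
  have hB4 : B4 = 0 := by simpa [hz, hs, hB3] using hQ4.symm
  have hB5 : B5 = 0 := by simpa [hz, hs, hB4] using hQ5.symm
  have hB6 : B6 = 0 := by simpa [hw, hs] using hR6.symm
  have hB1 : B1 = 0 := by simpa [hB6, hs] using hR1.symm
  simp [hB1, hB2, hB3, hB4, hB5, hB6]

theorem isTrihexagonalBlochSolution_of_mulVec_eq_zero (hz : z ≠ 0) (hw : w ≠ 0) (hs : s ≠ 0)
    (hW : c * c - s * c' = 1) {v : Fin 3 → ℂ}
    (hv : ((4 * c) • 1 - kagomeBlochMatrix z w) *ᵥ v = 0) :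
    IsTrihexagonalBlochSolution z w c s c' c (v 0) (v 2) (v 0) (v 0) (v 2 / w) (v 0)
      ((v 2 - c * v 0) / s) ((v 1 - c * v 2) / s) ((v 1 - c * v 0) / s)
      ((v 1 / z - c * v 0) / s) ((v 1 / z - c * v 2 / w) / s) ((v 2 / w - c * v 0) / s) := by
  obtain ⟨hP, hQ, hR⟩ := (smul_one_sub_kagomeBlochMatrix_mulVec_eq_zero_iff z w _ v).mp hv
  have hP' : 4 * c * v 0 * (z * w) = (z + 1) * w * v 1 + z * (w + 1) * v 2 := by
    rw [hP]; field_simp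
  have hQ' : 4 * c * v 1 * w = (1 + z) * w * v 0 + (w + z) * v 2 := by
    rw [hQ]; field_simp
  have hR' : 4 * c * v 2 * z = (1 + w) * z * v 0 + (z + w) * v 1 := by
    rw [hR]; field_simp
  have hc' : c' = (c * c - 1) / s := by rw [eq_div_iff hs]; linear_combination -hW
  subst hc'
  refine ⟨rfl, rfl, rfl, ?_, ?_, ?_, ?_, ?_, ?_, ?_, ?_, ?_⟩ <;> field_simp
  · linear_combination -hP'
  · ring
  · ring
  · ring
  · linear_combination hQ'
  · ring
  · ring
  · linear_combination hR'

theorem exists_isTrihexagonalBlochSolution_of_s_eq_zero (z w c' : ℂ) (hc : c * c = 1) :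
    ∃ A1 A2 A3 A4 A5 A6 B1 B2 B3 B4 B5 B6 : ℂ,
      (A1, A2, A3, A4, A5, A6, B1, B2, B3, B4, B5, B6) ≠ (0, 0, 0, 0, 0, 0, 0, 0, 0, 0, 0, 0) ∧
      IsTrihexagonalBlochSolution z w c 0 c' c A1 A2 A3 A4 A5 A6 B1 B2 B3 B4 B5 B6 := by
  have hc₁ : (c - 1) * (c + 1) = 0 := by linear_combination hc
  -- Dirichlet eigenfunctions supported on a closed path of edges
  rcases mul_eq_zero.mp hc₁ with hc | hc
  · exact ⟨0, 0, 0, 0, 0, 0, -1, -1, 1, 0, 0, 0, by simp, rfl, rfl, rfl, by ring, by ring,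
      by ring, by ring, by ring, by ring, by ring, by ring, by linear_combination -hc⟩
  · exact ⟨0, 0, 0, 0, 0, 0, -(w + 1), 1 - w, w - 1, 0, 0, 2, by simp, rfl, rfl, rfl,
      by ring, by ring, by ring, by ring, by ring, by ring, by ring, by ring,
      by linear_combination (w - 1) * hc⟩

theorem exists_isTrihexagonalBlochSolution_iff_det_eq_zero (hz : z ≠ 0) (hw : w ≠ 0)
    (hs : s ≠ 0) (hW : c * c - s * c' = 1) :
    (∃ A1 A2 A3 A4 A5 A6 B1 B2 B3 B4 B5 B6 : ℂ,
      (A1, A2, A3, A4, A5, A6, B1, B2, B3, B4, B5, B6) ≠ (0, 0, 0, 0, 0, 0, 0, 0, 0, 0, 0, 0) ∧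
      IsTrihexagonalBlochSolution z w c s c' c A1 A2 A3 A4 A5 A6 B1 B2 B3 B4 B5 B6) ↔
    ((4 * c) • 1 - kagomeBlochMatrix z w).det = 0 := by
  rw [← Matrix.exists_mulVec_eq_zero_iff]
  constructor
  · rintro ⟨A1, A2, A3, A4, A5, A6, B1, B2, B3, B4, B5, B6, hne, h⟩
    exact ⟨_, fun hv => hne (h.eq_zero_of_vertex_eq_zero hz hw hs hv), h.mulVec_eq_zero hz hw hW⟩
  · rintro ⟨v, hv0, hv⟩
    refine ⟨_, _, _, _, _, _, _, _, _, _, _, _, fun h => hv0 ?_,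
      isTrihexagonalBlochSolution_of_mulVec_eq_zero hz hw hs hW hv⟩
    simp only [Prod.mk.injEq] at h
    obtain ⟨h0, h2, -, -, -, -, -, h1, -⟩ := h
    have h1 : v 1 = 0 := by simpa [h2, hs] using h1
    ext i; fin_cases i <;> assumption

end

/-- Dispersion relation of the periodic quantum graph associated with the
trihexagonal tiling `(3,6,3,6)` with identical even edge potentials. -/
theorem trihexagonal_tiling_dispersion_relation
    (θ1 θ2 : ℝ) (c s c' s' : ℂ)
    (hW : c * s' - s * c' = 1) (hE : c = s') :
    (∃ A1 A2 A3 A4 A5 A6 B1 B2 B3 B4 B5 B6 : ℂ,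
      (A1, A2, A3, A4, A5, A6, B1, B2, B3, B4, B5, B6)
        ≠ (0, 0, 0, 0, 0, 0, 0, 0, 0, 0, 0, 0) ∧
      (A1 = A3 ∧ A3 = A4 ∧ A4 = A6 ∧
       B1 + B3 + B4 + B6 = 0 ∧
       A2 * c + B2 * s = A3 * c + B3 * s ∧
       A3 * c + B3 * s = Complex.exp (Complex.I * θ1) * (A4 * c + B4 * s) ∧
       Complex.exp (Complex.I * θ1) * (A4 * c + B4 * s)
         = Complex.exp (Complex.I * θ1) * (A5 * c + B5 * s) ∧
       (A2 * c' + B2 * s') + (A3 * c' + B3 * s')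
         + Complex.exp (Complex.I * θ1) * (A4 * c' + B4 * s')
         + Complex.exp (Complex.I * θ1) * (A5 * c' + B5 * s') = 0 ∧
       A2 = Complex.exp (Complex.I * θ2) * A5 ∧
       Complex.exp (Complex.I * θ2) * A5
         = Complex.exp (Complex.I * θ2) * (A6 * c + B6 * s) ∧
       Complex.exp (Complex.I * θ2) * (A6 * c + B6 * s) = A1 * c + B1 * s ∧
       -B2 - Complex.exp (Complex.I * θ2) * B5
         + Complex.exp (Complex.I * θ2) * (A6 * c' + B6 * s')
         + (A1 * c' + B1 * s') = 0))
    ↔ s ^ 3 * (2 * s' + 1) * (2 * s' ^ 2 - s'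
        - (Real.cos (θ1 / 2) : ℂ) * (Real.cos (θ2 / 2) : ℂ)
            * (Real.cos ((θ1 - θ2) / 2) : ℂ)) = 0 := by
  subst hE
  have hz : exp (I * θ1) ≠ 0 := exp_ne_zero _
  have hw : exp (I * θ2) ≠ 0 := exp_ne_zero _
  by_cases hs : s = 0
  · subst hs
    exact iff_of_true (exists_isTrihexagonalBlochSolution_of_s_eq_zero _ _ c'
      (by linear_combination hW)) (by ring)
  refine (exists_isTrihexagonalBlochSolution_iff_det_eq_zero hz hw hs hW).trans ?_
  set K := (Real.cos (θ1 / 2) : ℂ) * (Real.cos (θ2 / 2) : ℂ) * (Real.cos ((θ1 - θ2) / 2) : ℂ)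
  have hK : (1 + exp (I * θ1)) * (1 + exp (I * θ2)) * (exp (I * θ1) + exp (I * θ2))
      / (exp (I * θ1) * exp (I * θ2)) = 8 * K := by
    rw [div_eq_iff (mul_ne_zero hz hw), one_add_exp_mul_one_add_exp_mul_exp_add_exp]; ring
  rw [det_smul_one_sub_kagomeBlochMatrix hz hw, hK, show s ^ 3 * (2 * c + 1) * (2 * c ^ 2 - c - K) = s ^ 3 * ((2 * c + 1) * (2 * c ^ 2 - c - K))
    by ring, mul_eq_zero_iff_left (pow_ne_zero 3 hs)]
  constructor <;> intro h
  · linear_combination h / 16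
  · linear_combination 16 * h
end

section
/- For a real number t, there exist θ1, θ2 ∈ [−π, π] such that 3·t + 1 − 4·cos(θ1/2)·cos(θ2/2)·cos((θ2−θ1)/2) = 0 if and only if −1/2 ≤ t ≤ 1. (Consequently, the absolutely continuous spectrum of the periodic quantum graph associated with the triangular tiling with identical even potentials consists of those λ = ρ² with S'(a,ρ) ∈ [−1/2, 1].) -/
open Real

private lemma tri_key (x y : ℝ) :
    -(1/2) ≤ 4 * Real.cos x * Real.cos y * Real.cos (y - x) ∧
      4 * Real.cos x * Real.cos y * Real.cos (y - x) ≤ 4 := by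
  have hid : 4 * Real.cos x * Real.cos y * Real.cos (y - x)
      = 2 * (Real.cos (y - x))^2 + 2 * Real.cos (y - x) * Real.cos (x + y) := by
    rw [Real.cos_sub, Real.cos_add]; ring
  have hu1 : Real.cos (y - x) ≤ 1 := Real.cos_le_one _
  have hu2 : -1 ≤ Real.cos (y - x) := Real.neg_one_le_cos _
  have hw1 : Real.cos (x + y) ≤ 1 := Real.cos_le_one _
  have hw2 : -1 ≤ Real.cos (x + y) := Real.neg_one_le_cos _
  constructor
  · rw [hid]
    nlinarith [sq_nonneg (2 * Real.cos (y - x) + Real.cos (x + y)),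
      sq_nonneg (Real.cos (x + y))]
  · rw [hid]
    nlinarith [sq_nonneg (Real.cos (y - x) - Real.cos (x + y)),
      sq_nonneg (Real.cos (y - x) + Real.cos (x + y))]

/-- Solvability criterion for the dispersion relation of the triangular tiling:
the equation `3t + 1 − 4 cos(θ1/2) cos(θ2/2) cos((θ2−θ1)/2) = 0` has a solution
with `θ1, θ2 ∈ [−π, π]` iff `t ∈ [−1/2, 1]`. -/
theorem triangular_tiling_ac_spectrum_criterion (t : ℝ) :
    (∃ θ1 ∈ Set.Icc (-π) π, ∃ θ2 ∈ Set.Icc (-π) π,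
      3 * t + 1 - 4 * Real.cos (θ1 / 2) * Real.cos (θ2 / 2)
        * Real.cos ((θ2 - θ1) / 2) = 0)
    ↔ -(1 / 2) ≤ t ∧ t ≤ 1 := by
  constructor
  · rintro ⟨θ1, h1, θ2, h2, heq⟩
    have hdiff : (θ2 - θ1) / 2 = θ2 / 2 - θ1 / 2 := by ring
    rw [hdiff] at heq
    have := tri_key (θ1 / 2) (θ2 / 2)
    constructor <;> linarith [this.1, this.2]
  · rintro ⟨ht1, ht2⟩
    set s : ℝ := 3 * t + 1 with hs
    have hs0 : 0 ≤ 1 + 2 * s := by rw [hs]; linarith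
    set c : ℝ := (-1 + Real.sqrt (1 + 2 * s)) / 2 with hc
    have hsq : Real.sqrt (1 + 2 * s) ^ 2 = 1 + 2 * s := Real.sq_sqrt hs0
    have hsnn : 0 ≤ Real.sqrt (1 + 2 * s) := Real.sqrt_nonneg _
    have hsle : Real.sqrt (1 + 2 * s) ≤ 3 := by
      have h9 : Real.sqrt 9 = 3 := by
        rw [show (9:ℝ) = 3^2 by norm_num, Real.sqrt_sq (by norm_num : (0:ℝ) ≤ 3)]
      calc Real.sqrt (1 + 2 * s) ≤ Real.sqrt 9 :=
            Real.sqrt_le_sqrt (by rw [hs]; linarith)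
        _ = 3 := h9
    have hc1 : -1 ≤ c := by rw [hc]; linarith
    have hc2 : c ≤ 1 := by rw [hc]; linarith
    have hcos : Real.cos (Real.arccos c) = c := Real.cos_arccos hc1 hc2
    have hval : 2 * c ^ 2 + 2 * c = s := by
      have h21 : (2 * c + 1) ^ 2 = 1 + 2 * s := by
        rw [hc, show 2 * ((-1 + Real.sqrt (1 + 2 * s)) / 2) + 1
          = Real.sqrt (1 + 2 * s) by ring]
        exact hsq
      nlinarith [h21]
    refine ⟨-(Real.arccos c), ⟨by linarith [Real.arccos_le_pi c], by
        linarith [Real.arccos_nonneg c, Real.pi_pos]⟩,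
      Real.arccos c, ⟨by linarith [Real.arccos_nonneg c, Real.pi_pos],
        Real.arccos_le_pi c⟩, ?_⟩
    have hneg : Real.cos (-(Real.arccos c) / 2) = Real.cos (Real.arccos c / 2) := by
      rw [neg_div, Real.cos_neg]
    have hdiff : (Real.arccos c - -(Real.arccos c)) / 2 = Real.arccos c := by ring
    rw [hneg, hdiff, hcos]
    have hhalf : Real.cos (Real.arccos c / 2) ^ 2 = 1 / 2 + c / 2 := by
      rw [Real.cos_sq, show 2 * (Real.arccos c / 2) = Real.arccos c by ring, hcos]
    nlinarith [hhalf, hval]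
end

section
/- For a real number t, there exist θ1, θ2 ∈ [−π, π] such that 81·t⁴ − 54·t² − 12·t·(cos(θ1) + cos(θ2)) + 1 − 4·cos(θ1)·cos(θ2) = 0 if and only if −1 ≤ t ≤ 1. (Consequently, the absolutely continuous spectrum of the periodic quantum graph associated with the truncated square tiling with identical even potentials consists of those λ = ρ² with S'(a,ρ) ∈ [−1, 1].) -/
open Real

/-- Solvability criterion for the dispersion relation of the truncated square
tiling: the equation has a solution with `θ1, θ2 ∈ [−π, π]` iff `t ∈ [−1, 1]`. -/
theorem truncated_square_tiling_ac_spectrum_criterion (t : ℝ) :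
    (∃ θ1 ∈ Set.Icc (-π) π, ∃ θ2 ∈ Set.Icc (-π) π,
      81 * t ^ 4 - 54 * t ^ 2 - 12 * t * (Real.cos θ1 + Real.cos θ2)
        + 1 - 4 * Real.cos θ1 * Real.cos θ2 = 0)
    ↔ -1 ≤ t ∧ t ≤ 1 := by
  constructor
  · rintro ⟨θ1, -, θ2, -, h⟩
    set c1 := Real.cos θ1 with hc1
    set c2 := Real.cos θ2 with hc2
    have h1 : -1 ≤ c1 := Real.neg_one_le_cos θ1
    have h2 : c1 ≤ 1 := Real.cos_le_one θ1
    have h3 : -1 ≤ c2 := Real.neg_one_le_cos θ2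
    have h4 : c2 ≤ 1 := Real.cos_le_one θ2
    constructor
    · by_contra hlt
      push_neg at hlt
      nlinarith [mul_nonneg (sub_nonneg.2 h2) (sub_nonneg.2 h4),
        mul_nonneg (sub_nonneg.2 (neg_le_iff_add_nonneg.mp h1)) (sub_nonneg.2 h4),
        sq_nonneg (c1 + 1), sq_nonneg (c2 + 1), sq_nonneg (c1 + c2),
        mul_pos (by nlinarith : (0:ℝ) < -t - 1) (by nlinarith : (0:ℝ) < (-3*t+1)^3),
        mul_nonneg (mul_nonneg (by nlinarith : (0:ℝ) ≤ -t) (sub_nonneg.2 h2)) (sub_nonneg.2 h4)]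
    · by_contra hlt
      push_neg at hlt
      nlinarith [mul_nonneg (sub_nonneg.2 h2) (sub_nonneg.2 h4),
        sq_nonneg (c1 - 1), sq_nonneg (c2 - 1), sq_nonneg (c1 + c2),
        mul_pos (by nlinarith : (0:ℝ) < t - 1) (by nlinarith : (0:ℝ) < (3*t+1)^3),
        mul_nonneg (mul_nonneg (by nlinarith : (0:ℝ) ≤ t) (sub_nonneg.2 h2)) (sub_nonneg.2 h4)]
  · rintro ⟨hl, hr⟩
    rcases le_or_gt 0 t with ht | ht
    · set c : ℝ := (9*t^2 - 6*t - 1)/2 with hc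
      have hcl : -1 ≤ c := by rw [hc]; nlinarith [sq_nonneg (3*t - 1)]
      have hcu : c ≤ 1 := by rw [hc]; nlinarith
      refine ⟨Real.arccos c, ⟨le_trans (neg_nonpos.2 Real.pi_pos.le) (Real.arccos_nonneg c),
        Real.arccos_le_pi c⟩, Real.arccos c, ⟨le_trans (neg_nonpos.2 Real.pi_pos.le) (Real.arccos_nonneg c),
        Real.arccos_le_pi c⟩, ?_⟩
      rw [Real.cos_arccos hcl hcu]
      rw [hc]; ring
    · set c : ℝ := (-9*t^2 - 6*t + 1)/2 with hc
      have hcl : -1 ≤ c := by rw [hc]; nlinarith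
      have hcu : c ≤ 1 := by rw [hc]; nlinarith [sq_nonneg (3*t + 1)]
      refine ⟨Real.arccos c, ⟨le_trans (neg_nonpos.2 Real.pi_pos.le) (Real.arccos_nonneg c),
        Real.arccos_le_pi c⟩, Real.arccos c, ⟨le_trans (neg_nonpos.2 Real.pi_pos.le) (Real.arccos_nonneg c),
        Real.arccos_le_pi c⟩, ?_⟩
      rw [Real.cos_arccos hcl hcu]
      rw [hc]; ring
end

section
/- For a real number t, there exist θ1, θ2 ∈ [−π, π] such that 2·t² − t − cos(θ1/2)·cos(θ2/2)·cos((θ1−θ2)/2) = 0 if and only if −1/2 ≤ t ≤ 1. (Consequently, the absolutely continuous spectrum of the periodic quantum graph associated with the trihexagonal tiling with identical even potentials consists of those λ = ρ² with S'(a,ρ) ∈ [−1/2, 1], the same set as for the triangular tiling.) -/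
open Real

/-- Solvability criterion for the dispersion relation of the trihexagonal
tiling: the equation has a solution with `θ1, θ2 ∈ [−π, π]` iff `t ∈ [−1/2, 1]`. -/
theorem trihexagonal_tiling_ac_spectrum_criterion (t : ℝ) :
    (∃ θ1 ∈ Set.Icc (-π) π, ∃ θ2 ∈ Set.Icc (-π) π,
      2 * t ^ 2 - t - Real.cos (θ1 / 2) * Real.cos (θ2 / 2)
        * Real.cos ((θ1 - θ2) / 2) = 0)
    ↔ -(1 / 2) ≤ t ∧ t ≤ 1 := by
  constructor
  · rintro ⟨θ1, _, θ2, _, h⟩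
    have habs : |cos (θ1 / 2) * cos (θ2 / 2) * cos ((θ1 - θ2) / 2)| ≤ 1 := by
      rw [abs_mul, abs_mul]
      exact mul_le_one₀ (mul_le_one₀ (abs_cos_le_one _) (abs_nonneg _)
        (abs_cos_le_one _)) (abs_nonneg _) (abs_cos_le_one _)
    have hle : 2 * t ^ 2 - t ≤ 1 := by
      have := (abs_le.mp habs).2
      nlinarith
    constructor
    · nlinarith [sq_nonneg (t - 1)]
    · nlinarith [sq_nonneg (2 * t + 1)]
  · rintro ⟨h1, h2⟩
    set g : ℝ → ℝ := fun x => cos (x / 2) ^ 2 * cos x with hg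
    have hcont : ContinuousOn g (Set.Icc 0 (2 * π / 3)) := by
      fun_prop
    have h03 : (0 : ℝ) ≤ 2 * π / 3 := by positivity
    have hsub : Set.Icc (g (2 * π / 3)) (g 0) ⊆ g '' Set.Icc 0 (2 * π / 3) :=
      intermediate_value_Icc' h03 hcont
    have hg0 : g 0 = 1 := by simp [hg]
    have hg1 : g (2 * π / 3) = -(1/8) := by
      have e1 : (2 * π / 3) / 2 = π / 3 := by ring
      rw [hg]
      simp only [e1]
      rw [Real.cos_pi_div_three]
      have : (2 * π / 3) = 2 * (π / 3) := by ring
      rw [this, Real.cos_two_mul, Real.cos_pi_div_three]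
      norm_num
    have hmem : 2 * t ^ 2 - t ∈ Set.Icc (g (2 * π / 3)) (g 0) := by
      rw [hg0, hg1]
      constructor
      · nlinarith [sq_nonneg (2 * t - 1/2)]
      · nlinarith
    obtain ⟨x, hx, hgx⟩ := hsub hmem
    have hπ := Real.pi_pos
    refine ⟨x, ⟨by linarith [hx.1], by linarith [hx.2]⟩, -x,
      ⟨by linarith [hx.2], by linarith [hx.1]⟩, ?_⟩
    have e1 : (-x) / 2 = -(x / 2) := by ring
    have e2 : (x - -x) / 2 = x := by ring
    rw [e1, e2, Real.cos_neg]
    have : cos (x / 2) * cos (x / 2) * cos x = g x := by rw [hg]; ring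
    rw [this, hgx]
    ring
end

section
/- Suppose the potential q is even on [0,a], i.e. q(a−x) = q(x) for all x ∈ [0,a]. Then for every λ ∈ ℂ, S(a) = 2·S(a/2)·S'(a/2). -/
/-!
Since `q` is even, `x ↦ S (a - x)` solves the same equation as `S`, so its Wronskian with `S`,
`S (a - x) * S' x + S' (a - x) * S x`, is constant on `[0, a]`. At `x = 0` it equals `S a`, at
`x = a / 2` it equals `2 * S (a / 2) * S' (a / 2)`.
-/

open Set

section

variable {𝔸 : Type*} [NormedCommRing 𝔸] [NormedAlgebra ℝ 𝔸]

def IsSolutionOn (p : ℝ → 𝔸) (s : Set ℝ) (y dy : ℝ → 𝔸) : Prop :=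
  ∀ x ∈ s, HasDerivWithinAt y (dy x) s x ∧ HasDerivWithinAt dy (p x * y x) s x

theorem HasDerivWithinAt.comp_const_sub_of_mapsTo {f : ℝ → 𝔸} {f' : 𝔸} {s : Set ℝ} {a x : ℝ}
    (hs : MapsTo (fun t => a - t) s s) (hf : HasDerivWithinAt f f' s (a - x)) :
    HasDerivWithinAt (fun t => f (a - t)) (-f') s x := by
  simpa [Function.comp_def] using hf.scomp x ((hasDerivWithinAt_id x s).const_sub a) hs

theorem IsSolutionOn.comp_const_sub {p y dy : ℝ → 𝔸} {s : Set ℝ} {a : ℝ}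
    (hs : MapsTo (fun t => a - t) s s) (hp : ∀ x ∈ s, p (a - x) = p x)
    (h : IsSolutionOn p s y dy) :
    IsSolutionOn p s (fun t => y (a - t)) (fun t => -dy (a - t)) := by
  intro x hx
  obtain ⟨hy, hdy⟩ := h (a - x) (hs hx)
  refine ⟨hy.comp_const_sub_of_mapsTo hs, ?_⟩
  simpa [hp x hx] using (hdy.comp_const_sub_of_mapsTo hs).fun_neg

theorem IsSolutionOn.hasDerivWithinAt_wronskian {p y dy z dz : ℝ → 𝔸} {s : Set ℝ} {x : ℝ}
    (hsy : IsSolutionOn p s y dy) (hsz : IsSolutionOn p s z dz) (hx : x ∈ s) :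
    HasDerivWithinAt (fun t => y t * dz t - dy t * z t) 0 s x := by
  obtain ⟨hy, hdy⟩ := hsy x hx
  obtain ⟨hz, hdz⟩ := hsz x hx
  exact ((hy.fun_mul hdz).fun_sub (hdy.fun_mul hz)).congr_deriv (by ring)

theorem IsSolutionOn.wronskian_eq {p y dy z dz : ℝ → 𝔸} {b c : ℝ}
    (hy : IsSolutionOn p (Icc b c) y dy) (hz : IsSolutionOn p (Icc b c) z dz) :
    ∀ x ∈ Icc b c, y x * dz x - dy x * z x = y b * dz b - dy b * z b := by
  refine constant_of_has_deriv_right_zero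
    (fun x hx => (hy.hasDerivWithinAt_wronskian hz hx).continuousWithinAt) fun x hx => ?_
  exact (hy.hasDerivWithinAt_wronskian hz (Ico_subset_Icc_self hx)).mono_of_mem_nhdsWithin
    (Icc_mem_nhdsGE_of_mem hx)

end

theorem even_potential_S_half_identity_general
    (a : ℝ) (ha : 0 < a) (q : ℝ → ℝ)
    (hqeven : ∀ x ∈ Set.Icc 0 a, q (a - x) = q x)
    (lam : ℂ) (S Sd : ℝ → ℂ)
    (hS : ∀ x ∈ Set.Icc 0 a, HasDerivWithinAt S (Sd x) (Set.Icc 0 a) x)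
    (hS' : ∀ x ∈ Set.Icc 0 a,
      HasDerivWithinAt Sd ((q x : ℂ) * S x - lam * S x) (Set.Icc 0 a) x)
    (hS0 : S 0 = 0) (hSd0 : Sd 0 = 1) :
    S a = 2 * S (a / 2) * Sd (a / 2) := by
  have hrefl : MapsTo (fun t => a - t) (Icc 0 a) (Icc 0 a) := fun x hx =>
    ⟨by linarith [hx.2], by linarith [hx.1]⟩
  have hsol : IsSolutionOn (fun x => (q x : ℂ) - lam) (Icc 0 a) S Sd := fun x hx =>
    ⟨hS x hx, by simpa only [sub_mul] using hS' x hx⟩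
  have hsym : ∀ x ∈ Icc 0 a, (q (a - x) : ℂ) - lam = q x - lam := fun x hx => by
    rw [hqeven x hx]
  have hW := (hsol.comp_const_sub hrefl hsym).wronskian_eq hsol (a / 2) ⟨by linarith, by linarith⟩
  have hhalf : a - a / 2 = a / 2 := by ring
  simp only [hhalf, sub_zero, hS0, hSd0] at hW
  linear_combination -hW

/-- Magnus–Winkler identity for even potentials: if `q` is even on `[0,a]`,
then the sine-like solution `S` of `−y\'\' + q y = λ y` satisfies
`S(a) = 2 S(a/2) S\'(a/2)`. -/
theorem even_potential_S_half_identity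
    (a : ℝ) (ha : 0 < a) (q : ℝ → ℝ) (hq : ContinuousOn q (Set.Icc 0 a))
    (hqeven : ∀ x ∈ Set.Icc 0 a, q (a - x) = q x)
    (lam : ℂ) (C S Cd Sd : ℝ → ℂ)
    (hC : ∀ x ∈ Set.Icc 0 a, HasDerivWithinAt C (Cd x) (Set.Icc 0 a) x)
    (hC' : ∀ x ∈ Set.Icc 0 a,
      HasDerivWithinAt Cd ((q x : ℂ) * C x - lam * C x) (Set.Icc 0 a) x)
    (hS : ∀ x ∈ Set.Icc 0 a, HasDerivWithinAt S (Sd x) (Set.Icc 0 a) x)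
    (hS' : ∀ x ∈ Set.Icc 0 a,
      HasDerivWithinAt Sd ((q x : ℂ) * S x - lam * S x) (Set.Icc 0 a) x)
    (hC0 : C 0 = 1) (hCd0 : Cd 0 = 0) (hS0 : S 0 = 0) (hSd0 : Sd 0 = 1) :
    S a = 2 * S (a / 2) * Sd (a / 2) :=
  even_potential_S_half_identity_general a ha q hqeven lam S Sd hS hS' hS0 hSd0
end

section
/- Suppose the potential q is even on [0,a], i.e. q(a−x) = q(x) for all x ∈ [0,a]. Then for every λ ∈ ℂ, C'(a) = 2·C(a/2)·C'(a/2). -/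
/-!
If `p` is symmetric about `a/2` and `u, v` solve `y'' = p y`, then
`x ↦ u(a - x) v'(x) + u'(a - x) v(x)` has derivative
`u(a - x) v(x) (p x - p (a - x)) = 0`, so it is constant on `[0, a]`. For `u = v = C`
comparing the values at `0` and `a/2` gives `C'(a) = 2 C(a/2) C'(a/2)`.
-/

open Set

section Reflection

variable {a : ℝ} {f f' : ℝ → ℂ}

theorem hasDerivWithinAt_comp_reflect
    (hf : ∀ x ∈ Icc 0 a, HasDerivWithinAt f (f' x) (Icc 0 a) x) {x : ℝ} (hx : x ∈ Icc 0 a) :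
    HasDerivWithinAt (fun y => f (a - y)) (-f' (a - x)) (Icc 0 a) x := by
  have hreflect : HasDerivWithinAt (fun y : ℝ => a - y) (-1) (Icc 0 a) x := by
    simpa using (hasDerivWithinAt_id x (Icc 0 a)).const_sub a
  have := (hf (a - x) (sub_mem_Icc_zero_iff_right.mpr hx)).scomp_of_eq x hreflect
    (fun y hy => sub_mem_Icc_zero_iff_right.mpr hy) rfl
  simpa only [Function.comp_def, neg_smul, one_smul] using this

variable {p : ℝ → ℂ} {u u' v v' : ℝ → ℂ}

theorem hasDerivWithinAt_reflect_mul_add_of_symmetric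
    (hp : ∀ x ∈ Icc 0 a, p (a - x) = p x)
    (hu : ∀ x ∈ Icc 0 a, HasDerivWithinAt u (u' x) (Icc 0 a) x)
    (hu' : ∀ x ∈ Icc 0 a, HasDerivWithinAt u' (p x * u x) (Icc 0 a) x)
    (hv : ∀ x ∈ Icc 0 a, HasDerivWithinAt v (v' x) (Icc 0 a) x)
    (hv' : ∀ x ∈ Icc 0 a, HasDerivWithinAt v' (p x * v x) (Icc 0 a) x)
    {x : ℝ} (hx : x ∈ Icc 0 a) :
    HasDerivWithinAt (fun y => u (a - y) * v' y + u' (a - y) * v y) 0 (Icc 0 a) x := by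
  have h := ((hasDerivWithinAt_comp_reflect hu hx).mul (hv' x hx)).add
    ((hasDerivWithinAt_comp_reflect hu' hx).mul (hv x hx))
  exact h.congr_deriv (by rw [hp x hx]; ring)

theorem reflect_mul_add_eq_of_symmetric
    (hp : ∀ x ∈ Icc 0 a, p (a - x) = p x)
    (hu : ∀ x ∈ Icc 0 a, HasDerivWithinAt u (u' x) (Icc 0 a) x)
    (hu' : ∀ x ∈ Icc 0 a, HasDerivWithinAt u' (p x * u x) (Icc 0 a) x)
    (hv : ∀ x ∈ Icc 0 a, HasDerivWithinAt v (v' x) (Icc 0 a) x)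
    (hv' : ∀ x ∈ Icc 0 a, HasDerivWithinAt v' (p x * v x) (Icc 0 a) x) :
    ∀ x ∈ Icc 0 a, u (a - x) * v' x + u' (a - x) * v x = u a * v' 0 + u' a * v 0 := by
  have hderiv := fun x (hx : x ∈ Icc 0 a) => hasDerivWithinAt_reflect_mul_add_of_symmetric hp hu hu' hv hv' hx
  simpa only [sub_zero] using constant_of_has_deriv_right_zero
    (fun x hx => (hderiv x hx).continuousWithinAt)
    (fun x hx => (hderiv x (Ico_subset_Icc_self hx)).mono_of_mem_nhdsWithin
      (Icc_mem_nhdsGE_of_mem hx))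

end Reflection

theorem even_potential_Cd_half_identity_general
    (a : ℝ) (ha : 0 < a) (q : ℝ → ℝ)
    (hqeven : ∀ x ∈ Set.Icc 0 a, q (a - x) = q x)
    (lam : ℂ) (C Cd : ℝ → ℂ)
    (hC : ∀ x ∈ Set.Icc 0 a, HasDerivWithinAt C (Cd x) (Set.Icc 0 a) x)
    (hC' : ∀ x ∈ Set.Icc 0 a,
      HasDerivWithinAt Cd ((q x : ℂ) * C x - lam * C x) (Set.Icc 0 a) x)
    (hC0 : C 0 = 1) (hCd0 : Cd 0 = 0) :
    Cd a = 2 * C (a / 2) * Cd (a / 2) := by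
  have hp : ∀ x ∈ Icc 0 a, ((q (a - x) : ℂ) - lam) = (q x - lam) := fun x hx => by
    rw [hqeven x hx]
  have hC'' : ∀ x ∈ Icc 0 a, HasDerivWithinAt Cd ((q x - lam) * C x) (Icc 0 a) x :=
    fun x hx => (hC' x hx).congr_deriv (sub_mul _ _ _).symm
  have key := reflect_mul_add_eq_of_symmetric hp hC hC'' hC hC'' (a / 2) ⟨by linarith, by linarith⟩
  rw [show a - a / 2 = a / 2 by ring, hC0, hCd0] at key
  linear_combination -key

/-- Magnus–Winkler identity for even potentials: if `q` is even on `[0,a]`,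
then `C\'(a) = 2 C(a/2) C\'(a/2)`. -/
theorem even_potential_Cd_half_identity
    (a : ℝ) (ha : 0 < a) (q : ℝ → ℝ) (hq : ContinuousOn q (Set.Icc 0 a))
    (hqeven : ∀ x ∈ Set.Icc 0 a, q (a - x) = q x)
    (lam : ℂ) (C S Cd Sd : ℝ → ℂ)
    (hC : ∀ x ∈ Set.Icc 0 a, HasDerivWithinAt C (Cd x) (Set.Icc 0 a) x)
    (hC' : ∀ x ∈ Set.Icc 0 a,
      HasDerivWithinAt Cd ((q x : ℂ) * C x - lam * C x) (Set.Icc 0 a) x)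
    (hS : ∀ x ∈ Set.Icc 0 a, HasDerivWithinAt S (Sd x) (Set.Icc 0 a) x)
    (hS' : ∀ x ∈ Set.Icc 0 a,
      HasDerivWithinAt Sd ((q x : ℂ) * S x - lam * S x) (Set.Icc 0 a) x)
    (hC0 : C 0 = 1) (hCd0 : Cd 0 = 0) (hS0 : S 0 = 0) (hSd0 : Sd 0 = 1) :
    Cd a = 2 * C (a / 2) * Cd (a / 2) :=
  even_potential_Cd_half_identity_general a ha q hqeven lam C Cd hC hC' hC0 hCd0
end

section
/- Let θ1, θ2 ∈ ℝ and set α = exp(−i·θ1), β = exp(−i·θ2). For j = 1, 2, 3 let c_j, s_j, c_j', s_j' be complex numbers satisfying c_j·s_j' − s_j·c_j' = 1. Then there exists a nonzero vector (A1, A2, A3, B1, B2, B3) ∈ ℂ⁶ satisfying A1 = A2 = A3 = α·(A1·c1 + B1·s1) = β·(A2·c2 + B2·s2) = α⁻¹·β·(A3·c3 + B3·s3) and −B1 − B2 − B3 + α·(A1·c1' + B1·s1') + β·(A2·c2' + B2·s2') + α⁻¹·β·(A3·c3' + B3·s3') = 0, if and only if (s1'·s2·s3 + s1·s2'·s3 +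 s1·s2·s3') + (c1·s2·s3 + c2·s1·s3 + c3·s1·s2) − 2·s1·s2·cos(θ2−θ1) − 2·s2·s3·cos(θ1) − 2·s1·s3·cos(θ2) = 0. (This is the characteristic function of the periodic quantum graph associated with the triangular tiling, with possibly distinct, possibly non-even edge potentials.) -/
theorem my_det_fin_four {R : Type*} [CommRing R] (M : Matrix (Fin 4) (Fin 4) R) :
    M.det =
      M 0 0 * (M 1 1 * (M 2 2 * M 3 3 - M 2 3 * M 3 2) - M 1 2 * (M 2 1 * M 3 3 - M 2 3 * M 3 1)
        + M 1 3 * (M 2 1 * M 3 2 - M 2 2 * M 3 1))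
      - M 0 1 * (M 1 0 * (M 2 2 * M 3 3 - M 2 3 * M 3 2) - M 1 2 * (M 2 0 * M 3 3 - M 2 3 * M 3 0)
        + M 1 3 * (M 2 0 * M 3 2 - M 2 2 * M 3 0))
      + M 0 2 * (M 1 0 * (M 2 1 * M 3 3 - M 2 3 * M 3 1) - M 1 1 * (M 2 0 * M 3 3 - M 2 3 * M 3 0)
        + M 1 3 * (M 2 0 * M 3 1 - M 2 1 * M 3 0))
      - M 0 3 * (M 1 0 * (M 2 1 * M 3 2 - M 2 2 * M 3 1) - M 1 1 * (M 2 0 * M 3 2 - M 2 2 * M 3 0)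
        + M 1 2 * (M 2 0 * M 3 1 - M 2 1 * M 3 0)) := by
  rw [Matrix.det_succ_row_zero, Fin.sum_univ_four]
  norm_num [Matrix.det_fin_three, Matrix.submatrix_apply, Fin.succAbove, Fin.lt_def,
    show ((3:Fin 4):ℕ)=3 from rfl, show Fin.succ (2:Fin 3) = (3:Fin 4) from rfl,
    show Fin.castSucc (2:Fin 3) = (2:Fin 4) from rfl]
  ring

theorem det_aux (a b g x1 x2 x3 c1 s1 c1' s1' c2 s2 c2' s2' c3 s3 c3' s3' : ℂ) (d : ℂ)
    (h1 : a * g = 1) (h2 : b * d = 1)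
    (hd1 : 2 * x1 = a + g) (hd2 : 2 * x2 = b + d) (hd3 : 2 * x3 = a * d + b * g)
    (hW1 : c1 * s1' - s1 * c1' = 1)
    (hW2 : c2 * s2' - s2 * c2' = 1)
    (hW3 : c3 * s3' - s3 * c3' = 1) :
    (!![a*c1 - 1, a*s1, 0, 0;
        b*c2 - 1, 0, b*s2, 0;
        g*b*c3 - 1, 0, 0, g*b*s3;
        a*c1' + b*c2' + g*b*c3', a*s1' - 1, b*s2' - 1, g*b*s3' - 1] : Matrix (Fin 4) (Fin 4) ℂ).det
    = -b^2 * ((s1' * s2 * s3 + s1 * s2' * s3 + s1 * s2 * s3')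
        + (c1 * s2 * s3 + c2 * s1 * s3 + c3 * s1 * s2)
        - 2 * s1 * s2 * x3 - 2 * s2 * s3 * x1 - 2 * s1 * s3 * x2) := by
  rw [my_det_fin_four]
  norm_num [Matrix.cons_val_zero, Matrix.cons_val_one, Matrix.head_cons,
    Matrix.cons_val_two, Matrix.tail_cons, Matrix.cons_val_three]
  linear_combination (a^2*g*b^2*s2*s3) * hW1 + (a*g*b^3*s1*s3) * hW2 + (a*g^2*b^3*s1*s2) * hW3
    + (-(b^2)*(s1'*s2*s3 + s1*s2'*s3 + s1*s2*s3' + c1*s2*s3 + c2*s1*s3 + c3*s1*s2)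
        + a*b^2*s2*s3 + (b^3+b)*s1*s3 + g*b^3*s1*s2) * h1
    + (-(b*s1*s3) - a*b*s1*s2) * h2
    + (-(b^2)*s2*s3) * hd1 + (-(b^2)*s1*s3) * hd2 + (-(b^2)*s1*s2) * hd3

theorem main_aux (a b g d x1 x2 x3 c1 s1 c1' s1' c2 s2 c2' s2' c3 s3 c3' s3' : ℂ)
    (h1 : a * g = 1) (h2 : b * d = 1)
    (hd1 : 2 * x1 = a + g) (hd2 : 2 * x2 = b + d) (hd3 : 2 * x3 = a * d + b * g)
    (hW1 : c1 * s1' - s1 * c1' = 1)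
    (hW2 : c2 * s2' - s2 * c2' = 1)
    (hW3 : c3 * s3' - s3 * c3' = 1) :
    (∃ A1 A2 A3 B1 B2 B3 : ℂ,
      (A1, A2, A3, B1, B2, B3) ≠ (0, 0, 0, 0, 0, 0) ∧
      (A1 = A2 ∧ A2 = A3 ∧
       A3 = a * (A1 * c1 + B1 * s1) ∧
       a * (A1 * c1 + B1 * s1) = b * (A2 * c2 + B2 * s2) ∧
       b * (A2 * c2 + B2 * s2) = a⁻¹ * b * (A3 * c3 + B3 * s3) ∧
       -B1 - B2 - B3 + a * (A1 * c1' + B1 * s1') + b * (A2 * c2' + B2 * s2')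
         + a⁻¹ * b * (A3 * c3' + B3 * s3') = 0))
    ↔ (s1' * s2 * s3 + s1 * s2' * s3 + s1 * s2 * s3')
        + (c1 * s2 * s3 + c2 * s1 * s3 + c3 * s1 * s2)
        - 2 * s1 * s2 * x3 - 2 * s2 * s3 * x1 - 2 * s1 * s3 * x2 = 0 := by
  have hb : b ≠ 0 := fun h => by simp [h] at h2
  have hg : a⁻¹ = g := inv_eq_of_mul_eq_one_right h1
  set M : Matrix (Fin 4) (Fin 4) ℂ :=
    !![a*c1 - 1, a*s1, 0, 0;
       b*c2 - 1, 0, b*s2, 0;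
       g*b*c3 - 1, 0, 0, g*b*s3;
       a*c1' + b*c2' + g*b*c3', a*s1' - 1, b*s2' - 1, g*b*s3' - 1] with hM
  have hdet : M.det = -b^2 * ((s1' * s2 * s3 + s1 * s2' * s3 + s1 * s2 * s3')
        + (c1 * s2 * s3 + c2 * s1 * s3 + c3 * s1 * s2)
        - 2 * s1 * s2 * x3 - 2 * s2 * s3 * x1 - 2 * s1 * s3 * x2) :=
    det_aux a b g x1 x2 x3 c1 s1 c1' s1' c2 s2 c2' s2' c3 s3 c3' s3' d
      h1 h2 hd1 hd2 hd3 hW1 hW2 hW3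
  have key : (∃ A1 A2 A3 B1 B2 B3 : ℂ,
      (A1, A2, A3, B1, B2, B3) ≠ (0, 0, 0, 0, 0, 0) ∧
      (A1 = A2 ∧ A2 = A3 ∧
       A3 = a * (A1 * c1 + B1 * s1) ∧
       a * (A1 * c1 + B1 * s1) = b * (A2 * c2 + B2 * s2) ∧
       b * (A2 * c2 + B2 * s2) = a⁻¹ * b * (A3 * c3 + B3 * s3) ∧
       -B1 - B2 - B3 + a * (A1 * c1' + B1 * s1') + b * (A2 * c2' + B2 * s2')
         + a⁻¹ * b * (A3 * c3' + B3 * s3') = 0))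
      ↔ (∃ v : Fin 4 → ℂ, v ≠ 0 ∧ M.mulVec v = 0) := by
    constructor
    · rintro ⟨A1, A2, A3, B1, B2, B3, hne, rfl, rfl, e3, e4, e5, e6⟩
      rw [hg] at e5 e6
      refine ⟨![A1, B1, B2, B3], ?_, ?_⟩
      · intro h0
        apply hne
        have h0a := congrFun h0 0
        have h0b := congrFun h0 1
        have h0c := congrFun h0 2
        have h0d := congrFun h0 3
        simp only [Matrix.cons_val_zero, Matrix.cons_val_one, Matrix.head_cons,
          Matrix.cons_val_two, Matrix.tail_cons, Matrix.cons_val_three,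
          Pi.zero_apply] at h0a h0b h0c h0d
        simp [h0a, h0b, h0c, h0d]
      · funext i
        fin_cases i <;>
          simp [hM, Matrix.mulVec, dotProduct, Fin.sum_univ_four]
        · linear_combination -e3
        · linear_combination -e4 - e3
        · linear_combination -e5 - e4 - e3
        · linear_combination e6
    · rintro ⟨v, hv, hmv⟩
      have E1 := congrFun hmv 0
      have E2 := congrFun hmv 1
      have E3 := congrFun hmv 2
      have E4 := congrFun hmv 3
      simp [hM, Matrix.mulVec, dotProduct, Fin.sum_univ_four] at E1 E2 E3 E4
      refine ⟨v 0, v 0, v 0, v 1, v 2, v 3, ?_, rfl, rfl, ?_, ?_, ?_, ?_⟩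
      · intro h0
        apply hv
        simp only [Prod.mk.injEq] at h0
        obtain ⟨ha0, -, -, hb0, hc0, hd0⟩ := h0
        funext i
        fin_cases i
        · exact ha0
        · exact hb0
        · exact hc0
        · exact hd0
      · linear_combination -E1
      · linear_combination E1 - E2
      · rw [hg]; linear_combination E2 - E3
      · rw [hg]; linear_combination E4
  rw [key, show (∃ v : Fin 4 → ℂ, v ≠ 0 ∧ M.mulVec v = 0) ↔ M.det = 0 from
    Matrix.exists_mulVec_eq_zero_iff, hdet]
  constructor
  · intro h
    rcases mul_eq_zero.mp h with h' | h'
    · exact absurd h' (by simpa using pow_ne_zero 2 hb)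
    · exact h'
  · intro h; rw [h, mul_zero]

/-- Characteristic function of the periodic quantum graph associated with the
triangular tiling `(3⁶)`, with possibly distinct, possibly non-even edge
potentials. -/
theorem triangular_tiling_characteristic_function
    (θ1 θ2 : ℝ) (c1 s1 c1' s1' c2 s2 c2' s2' c3 s3 c3' s3' : ℂ)
    (hW1 : c1 * s1' - s1 * c1' = 1)
    (hW2 : c2 * s2' - s2 * c2' = 1)
    (hW3 : c3 * s3' - s3 * c3' = 1) :
    (∃ A1 A2 A3 B1 B2 B3 : ℂ,
      (A1, A2, A3, B1, B2, B3) ≠ (0, 0, 0, 0, 0, 0) ∧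
      (let α : ℂ := Complex.exp (-(Complex.I * θ1));
       let β : ℂ := Complex.exp (-(Complex.I * θ2));
       A1 = A2 ∧ A2 = A3 ∧
       A3 = α * (A1 * c1 + B1 * s1) ∧
       α * (A1 * c1 + B1 * s1) = β * (A2 * c2 + B2 * s2) ∧
       β * (A2 * c2 + B2 * s2) = α⁻¹ * β * (A3 * c3 + B3 * s3) ∧
       -B1 - B2 - B3 + α * (A1 * c1' + B1 * s1') + β * (A2 * c2' + B2 * s2')
         + α⁻¹ * β * (A3 * c3' + B3 * s3') = 0))
    ↔ (s1' * s2 * s3 + s1 * s2' * s3 + s1 * s2 * s3')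
        + (c1 * s2 * s3 + c2 * s1 * s3 + c3 * s1 * s2)
        - 2 * s1 * s2 * (Real.cos (θ2 - θ1) : ℂ)
        - 2 * s2 * s3 * (Real.cos θ1 : ℂ)
        - 2 * s1 * s3 * (Real.cos θ2 : ℂ) = 0 := by
  have h1 : Complex.exp (-(Complex.I * θ1)) * Complex.exp (Complex.I * θ1) = 1 := by
    rw [← Complex.exp_add]; simp
  have h2 : Complex.exp (-(Complex.I * θ2)) * Complex.exp (Complex.I * θ2) = 1 := by
    rw [← Complex.exp_add]; simp
  have hd1 : 2 * ((Real.cos θ1 : ℝ) : ℂ)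
      = Complex.exp (-(Complex.I * θ1)) + Complex.exp (Complex.I * θ1) := by
    rw [Complex.ofReal_cos, Complex.cos,
      show ((θ1 : ℂ) * Complex.I) = Complex.I * θ1 from mul_comm _ _,
      show ((-(θ1 : ℂ)) * Complex.I) = -(Complex.I * θ1) by ring]
    ring
  have hd2 : 2 * ((Real.cos θ2 : ℝ) : ℂ)
      = Complex.exp (-(Complex.I * θ2)) + Complex.exp (Complex.I * θ2) := by
    rw [Complex.ofReal_cos, Complex.cos,
      show ((θ2 : ℂ) * Complex.I) = Complex.I * θ2 from mul_comm _ _,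
      show ((-(θ2 : ℂ)) * Complex.I) = -(Complex.I * θ2) by ring]
    ring
  have hd3 : 2 * ((Real.cos (θ2 - θ1) : ℝ) : ℂ)
      = Complex.exp (-(Complex.I * θ1)) * Complex.exp (Complex.I * θ2)
        + Complex.exp (-(Complex.I * θ2)) * Complex.exp (Complex.I * θ1) := by
    rw [Complex.ofReal_cos, Complex.cos, ← Complex.exp_add, ← Complex.exp_add,
      show (((θ2 - θ1 : ℝ) : ℂ) * Complex.I) = -(Complex.I * θ1) + Complex.I * θ2 by
        push_cast; ring,
      show ((-((θ2 - θ1 : ℝ) : ℂ)) * Complex.I) = -(Complex.I * θ2) + Complex.I * θ1 by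
        push_cast; ring]
    ring
  exact main_aux (Complex.exp (-(Complex.I * θ1))) (Complex.exp (-(Complex.I * θ2)))
    (Complex.exp (Complex.I * θ1)) (Complex.exp (Complex.I * θ2))
    (Real.cos θ1 : ℂ) (Real.cos θ2 : ℂ) (Real.cos (θ2 - θ1) : ℂ)
    c1 s1 c1' s1' c2 s2 c2' s2' c3 s3 c3' s3' h1 h2 hd1 hd2 hd3 hW1 hW2 hW3
end

section
/- For j = 1, 2, 3 let c_j, s_j, c_j', s_j' be complex numbers satisfying c_j·s_j' − s_j·c_j' = 1, and for θ1, θ2 ∈ ℝ define ψ(θ1, θ2) = (s1'·s2·s3 + s1·s2'·s3 + s1·s2·s3') + (c1·s2·s3 + c2·s1·s3 + c3·s1·s2) − 2·s1·s2·cos(θ2−θ1) − 2·s2·s3·cos(θ1) − 2·s1·s3·cos(θ2). Then ψ(θ1, θ2) = 0 for all θ1, θ2 ∈ ℝ if and only if there exist distinct indices i, j ∈ {1, 2, 3} with s_i = s_j = 0. (This characterizes the point spectrum of the periodic quantum graph associated with the triangular tiling: λ = ρ² is a flat-band eigenvalue exactly when S_i(a,ρ) = S_j(a,ρ) = 0 for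 some i ≠ j.) -/
/-- Point spectrum characterization for the triangular tiling: the
characteristic function `ψ(θ1,θ2)` vanishes for all quasimomenta iff two of
the three sine-like values `s1, s2, s3` vanish. -/
theorem triangular_tiling_point_spectrum
    (c1 s1 c1' s1' c2 s2 c2' s2' c3 s3 c3' s3' : ℂ)
    (hW1 : c1 * s1' - s1 * c1' = 1)
    (hW2 : c2 * s2' - s2 * c2' = 1)
    (hW3 : c3 * s3' - s3 * c3' = 1) :
    (∀ θ1 θ2 : ℝ,
      (s1' * s2 * s3 + s1 * s2' * s3 + s1 * s2 * s3')
        + (c1 * s2 * s3 + c2 * s1 * s3 + c3 * s1 * s2)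
        - 2 * s1 * s2 * (Real.cos (θ2 - θ1) : ℂ)
        - 2 * s2 * s3 * (Real.cos θ1 : ℂ)
        - 2 * s1 * s3 * (Real.cos θ2 : ℂ) = 0)
    ↔ ∃ i j : Fin 3, i ≠ j ∧ ![s1, s2, s3] i = 0 ∧ ![s1, s2, s3] j = 0 := by
  constructor
  · intro h
    have h1 := h 0 0
    have h2 := h Real.pi 0
    have h3 := h 0 Real.pi
    have h4 := h Real.pi Real.pi
    simp only [sub_self, sub_zero, zero_sub, Real.cos_neg, Real.cos_zero,
      Real.cos_pi, Complex.ofReal_one, Complex.ofReal_neg, mul_one,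
      mul_neg_one, mul_neg] at h1 h2 h3 h4
    have hA : s1 * s2 = 0 := by
      linear_combination (-1/8 : ℂ) * h1 + (1/8 : ℂ) * h2 + (1/8 : ℂ) * h3
        + (-1/8 : ℂ) * h4
    have hB : s2 * s3 = 0 := by
      linear_combination (-1/8 : ℂ) * h1 + (1/8 : ℂ) * h2 + (-1/8 : ℂ) * h3
        + (1/8 : ℂ) * h4
    have hC : s1 * s3 = 0 := by
      linear_combination (-1/8 : ℂ) * h1 + (-1/8 : ℂ) * h2 + (1/8 : ℂ) * h3
        + (1/8 : ℂ) * h4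
    rcases mul_eq_zero.mp hA with h0 | h0
    · rcases mul_eq_zero.mp hB with h0' | h0'
      · exact ⟨0, 1, by decide, by simpa using h0, by simpa using h0'⟩
      · exact ⟨0, 2, by decide, by simpa using h0, by simpa using h0'⟩
    · rcases mul_eq_zero.mp hC with h0' | h0'
      · exact ⟨1, 0, by decide, by simpa using h0, by simpa using h0'⟩
      · exact ⟨1, 2, by decide, by simpa using h0, by simpa using h0'⟩
  · rintro ⟨i, j, hij, hi, hj⟩ θ1 θ2
    fin_cases i <;> fin_cases j <;> simp_all <;> ring
end

section
/- The range of the function f(θ1, θ2) = cos(θ1/2)·cos(θ2/2)·cos((θ1−θ2)/2), as (θ1, θ2) ranges over [−π, π]² (equivalently over ℝ²), is exactly the interval [−1/8, 1]. -/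
open Real

lemma cos_prod_bounds (a b : ℝ) :
    -(1/8) ≤ Real.cos a * Real.cos b * Real.cos (a - b) ∧
      Real.cos a * Real.cos b * Real.cos (a - b) ≤ 1 := by
  rw [Real.cos_sub]
  have ha := Real.sin_sq_add_cos_sq a
  have hb := Real.sin_sq_add_cos_sq b
  constructor
  · nlinarith [sq_nonneg (2 * Real.cos a ^ 2 + 2 * Real.cos b ^ 2 - 1),
      sq_nonneg (2 * Real.cos a * Real.sin a + 2 * Real.cos b * Real.sin b),
      sq_nonneg (Real.cos a * Real.sin b - Real.sin a * Real.cos b),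
      sq_nonneg (Real.cos a * Real.cos b - Real.sin a * Real.sin b)]
  · nlinarith [sq_nonneg (Real.cos a * Real.cos b + Real.sin a * Real.sin b),
      sq_nonneg (Real.cos a * Real.cos b - Real.sin a * Real.sin b),
      sq_nonneg (Real.cos a * Real.sin b - Real.sin a * Real.cos b),
      sq_nonneg (Real.cos a * Real.sin b + Real.sin a * Real.cos b)]

lemma icc_subset_image :
    Set.Icc (-(1/8) : ℝ) 1 ⊆
      (fun p : ℝ × ℝ =>
        Real.cos (p.1 / 2) * Real.cos (p.2 / 2) * Real.cos ((p.1 - p.2) / 2)) ''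
      (Set.Icc (-π) π ×ˢ Set.Icc (-π) π) := by
  intro y hy
  -- the path θ ↦ f(θ, -θ)
  set h : ℝ → ℝ := fun θ => Real.cos (θ / 2) * Real.cos (-θ / 2) * Real.cos ((θ - -θ) / 2)
  have hcont : ContinuousOn h (Set.Icc 0 (2 * π / 3)) := by
    apply Continuous.continuousOn
    fun_prop
  have hle : (0 : ℝ) ≤ 2 * π / 3 := by positivity
  have h0 : h 0 = 1 := by simp [h]
  have h1 : h (2 * π / 3) = -(1/8) := by
    have e1 : (2 * π / 3) / 2 = π / 3 := by ring
    have e2 : ((2 * π / 3) - -(2 * π / 3)) / 2 = 2 * π / 3 := by ring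
    have e3 : -(2 * π / 3) / 2 = -(π / 3) := by ring
    simp only [h, e1, e2, e3, Real.cos_neg]
    rw [Real.cos_pi_div_three, show (2 : ℝ) * π / 3 = π - π / 3 by ring,
      Real.cos_pi_sub, Real.cos_pi_div_three]
    norm_num
  have := intermediate_value_Icc' hle hcont
  rw [h0, h1] at this
  obtain ⟨θ, hθmem, hθ⟩ := this hy
  rcases hθmem with ⟨hθ0, hθ1⟩
  have hπ : 2 * π / 3 ≤ π := by nlinarith [Real.pi_pos]
  refine ⟨(θ, -θ), ?_, ?_⟩
  · simp only [Set.mem_prod, Set.mem_Icc]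
    refine ⟨⟨?_, ?_⟩, ?_, ?_⟩ <;> linarith [Real.pi_pos]
  simpa [h] using hθ

/-- The range of `f(θ1,θ2) = cos(θ1/2) cos(θ2/2) cos((θ1−θ2)/2)` over
`[−π,π]²` (equivalently over `ℝ²`) is exactly `[−1/8, 1]`. -/
theorem range_cos_half_product :
    (fun p : ℝ × ℝ =>
        Real.cos (p.1 / 2) * Real.cos (p.2 / 2) * Real.cos ((p.1 - p.2) / 2)) ''
      (Set.Icc (-π) π ×ˢ Set.Icc (-π) π) = Set.Icc (-(1 / 8)) 1 ∧
    Set.range (fun p : ℝ × ℝ =>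
        Real.cos (p.1 / 2) * Real.cos (p.2 / 2) * Real.cos ((p.1 - p.2) / 2))
      = Set.Icc (-(1 / 8)) 1 := by
  have hbound : ∀ p : ℝ × ℝ,
      Real.cos (p.1 / 2) * Real.cos (p.2 / 2) * Real.cos ((p.1 - p.2) / 2)
        ∈ Set.Icc (-(1/8) : ℝ) 1 := by
    intro p
    have := cos_prod_bounds (p.1 / 2) (p.2 / 2)
    have e : p.1 / 2 - p.2 / 2 = (p.1 - p.2) / 2 := by ring
    rw [e] at this
    exact ⟨this.1, this.2⟩
  constructor
  · apply Set.Subset.antisymm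
    · rintro y ⟨p, _, rfl⟩; exact hbound p
    · exact icc_subset_image
  · apply Set.Subset.antisymm
    · rintro y ⟨p, rfl⟩; exact hbound p
    · exact icc_subset_image.trans (Set.image_subset_range _ _)
end

section
/- Let a > 0, let η = arccos(−3/5), and let λ ≥ 0. Then cos(a·√λ) ≥ −3/5 if and only if λ ∈ [0, (η/a)²] or there exists a positive integer n with ((2nπ − η)/a)² ≤ λ ≤ ((2nπ + η)/a)². (Hence, in the free case q = 0, the absolutely continuous spectrum of the periodic quantum graph associated with the elongated triangular tiling equals [0, (η/a)²] ∪ ⋃_{n≥1} [((2nπ−η)/a)², ((2nπ+η)/a)²].) -/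
open Real

lemma band_core (x : ℝ) (hx : 0 ≤ x) :
    Real.cos x ≥ -(3 / 5) ↔
      x ≤ Real.arccos (-(3 / 5)) ∨
      ∃ n : ℕ, 0 < n ∧ 2 * (n : ℝ) * π - Real.arccos (-(3 / 5)) ≤ x ∧
        x ≤ 2 * (n : ℝ) * π + Real.arccos (-(3 / 5)) := by
  set η := Real.arccos (-(3 / 5)) with hη
  have hcosη : Real.cos η = -(3 / 5) := Real.cos_arccos (by norm_num) (by norm_num)
  have hη0 : 0 ≤ η := Real.arccos_nonneg _
  have hηπ : η ≤ π := Real.arccos_le_pi _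
  have hπ := Real.pi_pos
  constructor
  · intro h
    set m : ℤ := round (x / (2 * π)) with hm
    have h2π : (0:ℝ) < 2 * π := by linarith
    have hr : |x / (2 * π) - m| ≤ 1 / 2 := (abs_sub_round _).trans le_rfl
    set r : ℝ := x - 2 * m * π with hrdef
    have hrb : |r| ≤ π := by
      have hkey : r = (x / (2 * π) - m) * (2 * π) := by
        rw [hrdef]; field_simp
      rw [hkey, abs_mul, abs_of_pos h2π]
      nlinarith

    have hcosr : Real.cos r = Real.cos x := by
      have := Real.cos_sub_int_mul_two_pi x m
      rw [hrdef]
      convert this using 2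
      push_cast
      ring
    have habs : |r| ≤ η := by
      by_contra hc
      push_neg at hc
      have h1 : Real.cos |r| < Real.cos η :=
        Real.strictAntiOn_cos ⟨hη0, hηπ⟩ ⟨abs_nonneg r, hrb⟩ hc
      rw [Real.cos_abs, hcosr, hcosη] at h1
      linarith
    have hrl : -η ≤ r := neg_le_of_abs_le habs
    have hru : r ≤ η := le_of_abs_le habs
    rcases le_or_gt m 0 with hm0 | hm0
    · left
      have : (m : ℝ) ≤ 0 := by exact_mod_cast hm0
      nlinarith
    · right
      refine ⟨m.toNat, by omega, ?_, ?_⟩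
      · have : ((m.toNat : ℤ) : ℝ) = (m : ℝ) := by
          congr 1; omega
        push_cast at this ⊢
        nlinarith
      · have : ((m.toNat : ℤ) : ℝ) = (m : ℝ) := by
          congr 1; omega
        push_cast at this ⊢
        nlinarith
  · rintro (h | ⟨n, hn, h1, h2⟩)
    · have := Real.strictAntiOn_cos.antitoneOn ⟨hx, by linarith⟩ ⟨hη0, hηπ⟩ h
      rw [hcosη] at this
      linarith
    · set r : ℝ := x - 2 * n * π with hrdef
      have hcosr : Real.cos r = Real.cos x := by
        have := Real.cos_sub_int_mul_two_pi x (n : ℤ)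
        rw [hrdef]
        convert this using 2
        push_cast
        ring
      have habs : |r| ≤ η := abs_le.2 ⟨by simp [hrdef]; linarith, by simp [hrdef]; linarith⟩
      have h3 : Real.cos η ≤ Real.cos |r| :=
        Real.strictAntiOn_cos.antitoneOn ⟨abs_nonneg r, by linarith⟩ ⟨hη0, hηπ⟩ habs
      rw [Real.cos_abs, hcosr, hcosη] at h3
      linarith

/-- Band structure in the free case for the elongated triangular tiling:
for `a > 0`, `η = arccos(−3/5)` and `λ ≥ 0`, `cos(a √λ) ≥ −3/5` iff
`λ ∈ [0, (η/a)²]` or `λ ∈ [((2nπ−η)/a)², ((2nπ+η)/a)²]` for some positive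
integer `n`. -/
theorem free_band_structure_elongated_triangular
    (a lam : ℝ) (ha : 0 < a) (hlam : 0 ≤ lam) :
    Real.cos (a * Real.sqrt lam) ≥ -(3 / 5) ↔
      (0 ≤ lam ∧ lam ≤ (Real.arccos (-(3 / 5)) / a) ^ 2) ∨
      ∃ n : ℕ, 0 < n ∧
        ((2 * (n : ℝ) * π - Real.arccos (-(3 / 5))) / a) ^ 2 ≤ lam ∧
        lam ≤ ((2 * (n : ℝ) * π + Real.arccos (-(3 / 5))) / a) ^ 2 := by
  set η := Real.arccos (-(3 / 5)) with hη
  have hη0 : 0 ≤ η := Real.arccos_nonneg _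
  have hηπ : η ≤ π := Real.arccos_le_pi _
  have hπ := Real.pi_pos
  set s : ℝ := Real.sqrt lam with hs
  have hs0 : 0 ≤ s := Real.sqrt_nonneg _
  have hs2 : s ^ 2 = lam := Real.sq_sqrt hlam
  have hx0 : 0 ≤ a * s := mul_nonneg ha.le hs0
  rw [band_core (a * s) hx0]
  constructor
  · rintro (h | ⟨n, hn, h1, h2⟩)
    · left
      refine ⟨hlam, ?_⟩
      rw [div_pow, le_div_iff₀ (by positivity), ← hs2]
      nlinarith
    · right
      refine ⟨n, hn, ?_, ?_⟩
      · rw [div_pow, div_le_iff₀ (by positivity), ← hs2]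
        have hnn : (1:ℝ) ≤ (n:ℝ) := by exact_mod_cast hn
        have hpos : 0 ≤ 2 * (n:ℝ) * π - η := by nlinarith
        nlinarith [mul_le_mul h1 h1 hpos hx0]
      · rw [div_pow, le_div_iff₀ (by positivity), ← hs2]
        nlinarith [mul_le_mul h2 h2 hx0 (hx0.trans h2)]
  · rintro (⟨-, h⟩ | ⟨n, hn, h1, h2⟩)
    · left
      rw [div_pow, le_div_iff₀ (by positivity), ← hs2] at h
      nlinarith
    · right
      refine ⟨n, hn, ?_, ?_⟩
      · rw [div_pow, div_le_iff₀ (by positivity), ← hs2] at h1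
        have hnn : (1:ℝ) ≤ (n:ℝ) := by exact_mod_cast hn
        have hpos : 0 ≤ 2 * (n:ℝ) * π - η := by nlinarith
        nlinarith
      · rw [div_pow, le_div_iff₀ (by positivity), ← hs2] at h2
        have hpos2 : 0 ≤ 2 * (n:ℝ) * π + η := by positivity
        have := (pow_le_pow_iff_left₀ hx0 hpos2 (two_ne_zero)).1 (by nlinarith)
        linarith
end
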